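/- arXiv:2309.13263 — 5 statements merged into one kernel-verified Lean document; each statement's English description precedes it below -/
import Mathlib

section
/- Let $X$ be a complex Banach space and $A \in L(X)$ a bounded linear operator. Define $m(A) = \inf\{\Re \ell_z(A z) : \|z\| = 1, \ell_z \in T(z)\}$ and $k(A) = \sup\{\Re \ell_z(A z) : \|z\| = 1, \ell_z \in T(z)\}$, where $T(z) = \{\ell \in L(X,\mathbb{C}) : \ell(z) = \|z\|, \|\ell\| = 1\}$. Then for all $t \geq 0$ and all $u \in X$ with $\|u\| = 1$, one has $e^{m(A)t} \leq \|e^{tA} u\| \leq e^{k(A)t}$. -/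
open Metric Set

noncomputable section

/-- The set of norming functionals of `z`. -/
def normingFunctionals {X : Type*} [NormedAddCommGroup X] [NormedSpace ℂ X] (z : X) :
    Set (X →L[ℂ] ℂ) := {ℓ | ℓ z = (‖z‖ : ℂ) ∧ ‖ℓ‖ = 1}

/-- `m(A)`, the lower numerical bound of `A`. -/
def mLower {X : Type*} [NormedAddCommGroup X] [NormedSpace ℂ X] (A : X →L[ℂ] X) : ℝ :=
  sInf {x | ∃ z ℓ, ‖z‖ = 1 ∧ ℓ ∈ normingFunctionals z ∧ x = (ℓ (A z)).re}

/-- `k(A)`, the upper numerical bound of `A`. -/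
def kUpper {X : Type*} [NormedAddCommGroup X] [NormedSpace ℂ X] (A : X →L[ℂ] X) : ℝ :=
  sSup {x | ∃ z ℓ, ‖z‖ = 1 ∧ ℓ ∈ normingFunctionals z ∧ x = (ℓ (A z)).re}

/-!
Let `φ(s) = ‖e^{sA} w‖`. If `ℓ` norms `e^{sA} w`, then `φ(s + h) ≥ re ℓ(e^{(s+h)A} w)`, so the right
lower Dini derivative of `φ` at `s` is at least `re ℓ(A e^{sA} w) ≥ m(A) φ(s)`; Grönwall's
inequality gives `φ(t) ≥ e^{m(A) t} φ(0)`. The upper bound is the lower bound for `-A` applied to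
`e^{tA} w`, because `m(-A) = -k(A)` and `e^{-tA}` inverts `e^{tA}`.
-/

open Filter Topology

section NormingFunctional

variable {E : Type*} [NormedAddCommGroup E] [NormedSpace ℂ E]

lemma re_apply_le_norm_of_norm_le_one {ℓ : StrongDual ℂ E} (hℓ : ‖ℓ‖ ≤ 1) (y : E) :
    (ℓ y).re ≤ ‖y‖ :=
  calc (ℓ y).re ≤ ‖ℓ y‖ := Complex.re_le_norm _
    _ ≤ ‖ℓ‖ * ‖y‖ := ℓ.le_opNorm y
    _ ≤ ‖y‖ := mul_le_of_le_one_left (norm_nonneg y) hℓ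

lemma re_apply_slope_le_slope_norm {f : ℝ → E} {x z : ℝ} (hxz : x < z) {ℓ : StrongDual ℂ E}
    (hℓ : ‖ℓ‖ ≤ 1) (hℓx : ℓ (f x) = ‖f x‖) :
    (ℓ (slope f x z)).re ≤ slope (fun s => ‖f s‖) x z := by
  rw [slope_def_module, slope_def_field, ℓ.map_smul_of_tower, Complex.smul_re, map_sub,
    Complex.sub_re, hℓx, Complex.ofReal_re, smul_eq_mul, div_eq_inv_mul]
  have := re_apply_le_norm_of_norm_le_one hℓ (f z)
  gcongr

lemma eventually_lt_slope_norm {f : ℝ → E} {f' : E} {x : ℝ} (hf : HasDerivWithinAt f f' (Ioi x) x)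
    {ℓ : StrongDual ℂ E} (hℓ : ‖ℓ‖ ≤ 1) (hℓx : ℓ (f x) = ‖f x‖) {r : ℝ}
    (hr : r < (ℓ f').re) :
    ∀ᶠ z in 𝓝[>] x, r < slope (fun s => ‖f s‖) x z := by
  have hslope : Tendsto (slope f x) (𝓝[>] x) (𝓝 f') :=
    (hasDerivWithinAt_iff_tendsto_slope' (lt_irrefl x)).mp hf
  have hre : Tendsto (fun z => (ℓ (slope f x z)).re) (𝓝[>] x) (𝓝 ((ℓ f').re)) :=
    ((Complex.continuous_re.comp ℓ.continuous).tendsto f').comp hslope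
  filter_upwards [hre.eventually_const_lt hr, self_mem_nhdsWithin] with z hz hxz
  exact hz.trans_le (re_apply_slope_le_slope_norm hxz hℓ hℓx)

theorem norm_mul_exp_le_norm_of_le_re_deriv {f f' : ℝ → E} {K a b : ℝ}
    (hf : ContinuousOn f (Icc a b)) (hf' : ∀ x ∈ Ico a b, HasDerivWithinAt f (f' x) (Ioi x) x)
    (bound : ∀ x ∈ Ico a b, ∀ ℓ : StrongDual ℂ E, ‖ℓ‖ ≤ 1 → ℓ (f x) = ‖f x‖ →
      K * ‖f x‖ ≤ (ℓ (f' x)).re) :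
    ∀ x ∈ Icc a b, ‖f a‖ * Real.exp (K * (x - a)) ≤ ‖f x‖ := by
  have hdini : ∀ x ∈ Ico a b, ∀ r, K * -‖f x‖ < r →
      ∃ᶠ z in 𝓝[>] x, (z - x)⁻¹ * (-‖f z‖ - -‖f x‖) < r := by
    intro x hx r hr
    obtain ⟨ℓ, hℓ, hℓx⟩ := exists_dual_vector'' ℂ (f x)
    have hlt : -r < (ℓ (f' x)).re := by linarith [bound x hx ℓ hℓ hℓx]
    refine ((eventually_lt_slope_norm (hf' x hx) hℓ hℓx hlt).mono fun z hz => ?_) |>.frequently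
    rw [slope_def_field, div_eq_inv_mul] at hz
    linarith
  intro x hx
  -- Grönwall's inequality only bounds from above, so it is applied to `-‖f‖`.
  have := le_gronwallBound_of_liminf_deriv_right_le hf.norm.neg hdini le_rfl
    (fun x _ => (add_zero _).ge) x hx
  rw [gronwallBound_ε0] at this
  simp only [Pi.neg_apply] at this
  linarith

end NormingFunctional

open NormedSpace

section NumericalRange

variable {X : Type*} [NormedAddCommGroup X] [NormedSpace ℂ X]

def numericalRangeRe (A : X →L[ℂ] X) : Set ℝ :=
  {x | ∃ z ℓ, ‖z‖ = 1 ∧ ℓ ∈ normingFunctionals z ∧ x = (ℓ (A z)).re}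

lemma abs_le_opNorm_of_mem_numericalRangeRe {A : X →L[ℂ] X} {x : ℝ}
    (hx : x ∈ numericalRangeRe A) : |x| ≤ ‖A‖ := by
  obtain ⟨z, ℓ, hz, ⟨-, hℓ⟩, rfl⟩ := hx
  calc |(ℓ (A z)).re| ≤ ‖ℓ (A z)‖ := Complex.abs_re_le_norm _
    _ ≤ ‖ℓ‖ * ‖A z‖ := ℓ.le_opNorm _
    _ ≤ ‖A‖ := by rw [hℓ, one_mul]; simpa [hz] using A.le_opNorm z

lemma bddBelow_numericalRangeRe (A : X →L[ℂ] X) : BddBelow (numericalRangeRe A) :=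
  ⟨-‖A‖, fun _ hx => neg_le_of_abs_le (abs_le_opNorm_of_mem_numericalRangeRe hx)⟩

lemma numericalRangeRe_neg (A : X →L[ℂ] X) : numericalRangeRe (-A) = -numericalRangeRe A := by
  ext x
  simp [numericalRangeRe, neg_eq_iff_eq_neg]

lemma mLower_neg (A : X →L[ℂ] X) : mLower (-A) = -kUpper A := by
  change sInf (numericalRangeRe (-A)) = -sSup (numericalRangeRe A)
  rw [numericalRangeRe_neg, Real.sInf_neg]

lemma mLower_mul_norm_le_re_apply (A : X →L[ℂ] X) {z : X} {ℓ : StrongDual ℂ X} (hℓ : ‖ℓ‖ ≤ 1)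
    (hℓz : ℓ z = ‖z‖) : mLower A * ‖z‖ ≤ (ℓ (A z)).re := by
  rcases eq_or_ne z 0 with rfl | hz
  · simp
  have hz' : 0 < ‖z‖ := norm_pos_iff.mpr hz
  have hℓ1 : ‖ℓ‖ = 1 := le_antisymm hℓ <| by
    simpa [hℓz, hz'.ne'] using ℓ.ratio_le_opNorm z
  have hunit : ‖‖z‖⁻¹ • z‖ = 1 := by
    rw [norm_smul, norm_inv, norm_norm, inv_mul_cancel₀ hz'.ne']
  have hmem : ‖z‖⁻¹ * (ℓ (A z)).re ∈ numericalRangeRe A := by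
    refine ⟨‖z‖⁻¹ • z, ℓ, hunit, ⟨?_, hℓ1⟩, ?_⟩
    · simp [ℓ.map_smul_of_tower, hℓz, hz'.ne', hunit]
    · simp [ℓ.map_smul_of_tower]
  rw [mul_comm]
  exact (le_inv_mul_iff₀ hz').mp (csInf_le (bddBelow_numericalRangeRe A) hmem)

end NumericalRange

section Exponential

variable {X : Type*} [NormedAddCommGroup X] [NormedSpace ℂ X] [CompleteSpace X]

lemma hasDerivAt_exp_smul_apply (A : X →L[ℂ] X) (w : X) (t : ℝ) :
    HasDerivAt (fun s : ℝ => exp ((s : ℂ) • A) w) (A (exp ((t : ℂ) • A) w)) t := by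
  have hexp : HasDerivAt (fun s : ℝ => exp ((s : ℂ) • A)) (A * exp ((t : ℂ) • A)) t := by
    simpa only [Complex.coe_smul] using hasDerivAt_exp_smul_const' (𝕂 := ℝ) A t
  exact ((ContinuousLinearMap.apply ℂ X w).restrictScalars ℝ).hasFDerivAt.comp_hasDerivAt t hexp

lemma exp_neg_apply_exp_apply (B : X →L[ℂ] X) (w : X) : exp (-B) (exp B w) = w := by
  have hball (C : X →L[ℂ] X) : C ∈ eball 0 (expSeries ℂ (X →L[ℂ] X)).radius := by
    simp [expSeries_radius_eq_top]
  rw [← mul_apply_eq_comp, ← exp_add_of_commute_of_mem_ball (Commute.refl B).neg_left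
    (hball _) (hball _), neg_add_cancel, exp_zero, one_apply_eq_self]

theorem exp_mLower_mul_mul_norm_le (A : X →L[ℂ] X) {t : ℝ} (ht : 0 ≤ t) (w : X) :
    Real.exp (mLower A * t) * ‖w‖ ≤ ‖exp ((t : ℂ) • A) w‖ := by
  have horbit := hasDerivAt_exp_smul_apply A w
  have := norm_mul_exp_le_norm_of_le_re_deriv (K := mLower A) (a := 0) (b := t)
    (fun s _ => (horbit s).continuousAt.continuousWithinAt)
    (fun s _ => (horbit s).hasDerivWithinAt)
    (fun s _ ℓ hℓ hℓs => mLower_mul_norm_le_re_apply A hℓ hℓs) t ⟨ht, le_rfl⟩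
  simpa [mul_comm] using this

theorem norm_exp_smul_apply_le (A : X →L[ℂ] X) {t : ℝ} (ht : 0 ≤ t) (w : X) :
    ‖exp ((t : ℂ) • A) w‖ ≤ Real.exp (kUpper A * t) * ‖w‖ := by
  have h := exp_mLower_mul_mul_norm_le (-A) ht (exp ((t : ℂ) • A) w)
  rw [smul_neg, exp_neg_apply_exp_apply, mLower_neg, neg_mul, Real.exp_neg] at h
  rwa [← inv_mul_le_iff₀ (Real.exp_pos _)]

end Exponential

theorem exp_growth_bounds {X : Type*} [NormedAddCommGroup X] [NormedSpace ℂ X]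
    [CompleteSpace X] (A : X →L[ℂ] X) :
    ∀ t : ℝ, 0 ≤ t → ∀ u : X, ‖u‖ = 1 →
      Real.exp (mLower A * t) ≤ ‖NormedSpace.exp ((t : ℂ) • A) u‖ ∧
      ‖NormedSpace.exp ((t : ℂ) • A) u‖ ≤ Real.exp (kUpper A * t) := by
  intro t ht u hu
  have hlower := exp_mLower_mul_mul_norm_le A ht u
  have hupper := norm_exp_smul_apply_le A ht u
  rw [hu, mul_one] at hlower hupper
  exact ⟨hlower, hupper⟩
end
end

section
/- Let $\mathbb{B}$ be the unit ball of a complex Banach space $X$, $A \in L(X)$ with $m(A) > 0$, and let $v(z,s,t)$ be a family of Schwarz mappings satisfying the semigroup property with $Dv(0,s,t) = e^{-(t-s)A}$. Then for every $r \in (0,1)$ there exists a constant $M(r) > 0$ such that $\|v(z,s,t_1) - v(z,s,t_2)\| \leq M(r) \|A\| (t_2 - t_1)$ for all $\|z\| \leq r$ and $0 \leq s \leq t_1 < t_2$. -/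
/-!
Write `h z = z - v(z, t₁, t₂)`. By the semigroup property the difference to estimate is
`h (v(z, s, t₁))`, and the Schwarz lemma keeps `v(z, s, t₁)` in the ball of radius `r`. Two
estimates then bound `‖h‖` there by `C(r) ‖1 - Dv(0, t₁, t₂)‖`, and
`‖1 - e^{-(t₂-t₁)A}‖ ≤ 2 ‖A‖ (t₂ - t₁)` (when `‖A‖ (t₂ - t₁) > 1`, because `‖Dv(0, t₁, t₂)‖ ≤ 1`).

* Numerical range. For a norming functional `ℓ` of `y`, the function `λ ↦ ℓ (h (λ y)) / λ` has
  nonnegative real part on the disc `|λ| < 1/‖y‖` (Schwarz lemma), so Harnack's inequality (via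
  Borel–Carathéodory) bounds its value at `λ = 1` by `(1 + ‖y‖) / (1 - ‖y‖)` times its value
  `ℓ (Dh(0) y)` at `λ = 0`.
* From numerical range to norm. If `|ℓ (h y)| ≤ ν` for all norming `ℓ` of `y`, `‖y‖ ≤ R`, a step
  `x ↦ x + τ h x` of an Euler polygon raises the norm by at most `|τ| ν + O(|τ|²)`. Hence the
  `n`-step polygon with step `τ`, a holomorphic function of `τ`, stays in the ball for `|τ| < s/n`
  once `s ν < R - r`, and its derivative at `τ = 0` is `n h(x₀)`; the Cauchy estimate gives
  `‖h x₀‖ ≤ 2 / s`.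
-/

open Metric Set

noncomputable section

/-- A Schwarz mapping of the unit ball: holomorphic self-map of the open unit ball fixing `0`. -/
def IsSchwarzMapping {X : Type*} [NormedAddCommGroup X] [NormedSpace ℂ X] (v : X → X) : Prop :=
  DifferentiableOn ℂ v (ball (0 : X) 1) ∧ MapsTo v (ball (0 : X) 1) (ball (0 : X) 1) ∧ v 0 = 0

theorem norm_exp_sub_one_le_exp_norm_sub_one {𝕂 𝔸 : Type*} [RCLike 𝕂] [NormedRing 𝔸]
    [NormedAlgebra 𝕂 𝔸] [CompleteSpace 𝔸] (x : 𝔸) :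
    ‖NormedSpace.exp x - 1‖ ≤ Real.exp ‖x‖ - 1 := by
  have hx : HasSum (fun n ↦ (((n + 1).factorial : 𝕂)⁻¹) • x ^ (n + 1)) (NormedSpace.exp x - 1) := by
    simpa using (hasSum_nat_add_iff' 1).mpr (NormedSpace.exp_series_hasSum_exp' (𝕂 := 𝕂) x)
  have hr : HasSum (fun n ↦ (((n + 1).factorial : ℝ)⁻¹) • ‖x‖ ^ (n + 1)) (Real.exp ‖x‖ - 1) := by
    simpa [Real.exp_eq_exp_ℝ] using
      (hasSum_nat_add_iff' 1).mpr (NormedSpace.exp_series_hasSum_exp' (𝕂 := ℝ) ‖x‖)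
  refine hx.norm_le_of_bounded hr fun n ↦ ?_
  rw [norm_smul, norm_inv, RCLike.norm_natCast, smul_eq_mul]
  gcongr
  exact norm_pow_le' x n.succ_pos

theorem norm_exp_sub_one_le_two_mul {𝕂 𝔸 : Type*} [RCLike 𝕂] [NormedRing 𝔸]
    [NormedAlgebra 𝕂 𝔸] [CompleteSpace 𝔸] {x : 𝔸} (hx : ‖x‖ ≤ 1) :
    ‖NormedSpace.exp x - 1‖ ≤ 2 * ‖x‖ := by
  have := Real.abs_exp_sub_one_le (x := ‖x‖) (by rwa [abs_norm])
  rw [abs_norm, abs_of_nonneg (by linarith [Real.add_one_le_exp ‖x‖, norm_nonneg x])] at this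
  exact (norm_exp_sub_one_le_exp_norm_sub_one (𝕂 := 𝕂) x).trans this

theorem Complex.norm_le_of_re_nonneg {φ : ℂ → ℂ} {R : ℝ} {l : ℂ}
    (hφ : DifferentiableOn ℂ φ (ball 0 R)) (hre : ∀ w ∈ ball (0 : ℂ) R, 0 ≤ (φ w).re)
    (hl : l ∈ ball (0 : ℂ) R) :
    ‖φ l‖ ≤ ‖φ 0‖ * (R + ‖l‖) / (R - ‖l‖) := by
  have hlR : 0 < R - ‖l‖ := sub_pos.mpr (mem_ball_zero_iff.mp hl)
  have hR : 0 < R := by linarith [norm_nonneg l]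
  refine le_of_forall_pos_le_add fun ε hε ↦ ?_
  have hM : 0 < ε * (R - ‖l‖) / (2 * R) := by positivity
  have hBC := Complex.borelCaratheodory (f := -φ) hM hφ.neg
    (fun w hw ↦ by simpa using (neg_nonpos.mpr (hre w hw)).trans hM.le) hR hl
  simp only [Pi.neg_apply, norm_neg] at hBC
  calc ‖φ l‖ ≤ _ := hBC
    _ = ‖φ 0‖ * (R + ‖l‖) / (R - ‖l‖) + ε * (‖l‖ / R) := by field_simp; ring
    _ ≤ _ := by
      gcongr
      exact mul_le_of_le_one_right hε.le ((div_le_one hR).mpr (by linarith))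

theorem Complex.norm_le_of_re_div_nonneg {F : ℂ → ℂ} {R : ℝ} {l : ℂ}
    (hF : DifferentiableOn ℂ F (ball 0 R)) (hF0 : F 0 = 0)
    (hre : ∀ w ∈ ball (0 : ℂ) R, w ≠ 0 → 0 ≤ (F w / w).re) (hl : l ∈ ball (0 : ℂ) R) :
    ‖F l‖ ≤ ‖deriv F 0‖ * ‖l‖ * (R + ‖l‖) / (R - ‖l‖) := by
  have hR : 0 < R := (norm_nonneg l).trans_lt (mem_ball_zero_iff.mp hl)
  have hslope : DifferentiableOn ℂ (dslope F 0) (ball 0 R) :=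
    (Complex.differentiableOn_dslope (ball_mem_nhds 0 hR)).mpr hF
  have hre_ne : ∀ w ∈ ball (0 : ℂ) R, w ≠ 0 → 0 ≤ (dslope F 0 w).re := fun w hw hw0 ↦ by
    simpa [dslope_of_ne _ hw0, slope_def_field, hF0] using hre w hw hw0
  have hre0 : 0 ≤ (dslope F 0 0).re := by
    have hcont := (Complex.continuous_re.continuousAt.comp
      (hslope.differentiableAt (ball_mem_nhds 0 hR)).continuousAt).tendsto
    refine ge_of_tendsto (hcont.mono_left (nhdsWithin_le_nhds (s := {0}ᶜ))) ?_
    filter_upwards [self_mem_nhdsWithin, nhdsWithin_le_nhds (ball_mem_nhds (0 : ℂ) hR)]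
      with w hw0 hw using hre_ne w hw hw0
  have hFl : F l = l * dslope F 0 l := by simpa [hF0] using (sub_smul_dslope F 0 l).symm
  rw [hFl, norm_mul, ← dslope_same]
  have := Complex.norm_le_of_re_nonneg hslope
    (fun w hw ↦ (eq_or_ne w 0).elim (fun h ↦ h ▸ hre0) (hre_ne w hw)) hl
  calc ‖l‖ * ‖dslope F 0 l‖ ≤ ‖l‖ * (‖dslope F 0 0‖ * (R + ‖l‖) / (R - ‖l‖)) := by gcongr
    _ = _ := by ring

section

variable {X : Type*} [NormedAddCommGroup X] [NormedSpace ℂ X]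

theorem norm_apply_le_of_mem_normingFunctionals {z : X} {ℓ : X →L[ℂ] ℂ}
    (hℓ : ℓ ∈ normingFunctionals z) (x : X) : ‖ℓ x‖ ≤ ‖x‖ :=
  (ℓ.le_opNorm x).trans_eq (by rw [hℓ.2, one_mul])

def NumericalRangeBound (h : X → X) (R ν : ℝ) : Prop :=
  ∀ y : X, y ≠ 0 → ‖y‖ ≤ R → ∀ ℓ ∈ normingFunctionals y, ‖ℓ (h y)‖ ≤ ν

section NumericalRange

variable {h : X → X} {K R : ℝ}

theorem norm_apply_sub_apply_le_of_bounded (hd : DifferentiableOn ℂ h (ball 0 1))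
    (hK : ∀ y ∈ ball (0 : X) 1, ‖h y‖ ≤ K) (hR : R < 1) {x x' : X} (hx : ‖x‖ ≤ R)
    (hx' : x' ∈ ball (0 : X) 1) :
    ‖h x' - h x‖ ≤ 2 * K / (1 - R) * ‖x' - x‖ := by
  have hR' : 0 < 1 - R := sub_pos.mpr hR
  have hx1 : x ∈ ball (0 : X) 1 := mem_ball_zero_iff.mpr (hx.trans_lt hR)
  by_cases hclose : ‖x' - x‖ < 1 - R
  · have hsub : ball x (1 - R) ⊆ ball 0 1 := ball_subset_ball' (by simp; linarith)
    have hmaps : MapsTo h (ball x (1 - R)) (closedBall (h x) (2 * K)) := fun y hy ↦ by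
      rw [mem_closedBall, dist_eq_norm, two_mul]
      exact (norm_sub_le _ _).trans (add_le_add (hK y (hsub hy)) (hK x hx1))
    simpa [dist_eq_norm] using
      Complex.dist_le_div_mul_dist_of_mapsTo_ball (hd.mono hsub) hmaps
        (mem_ball_iff_norm.mpr hclose)
  · calc ‖h x' - h x‖ ≤ 2 * K := (norm_sub_le _ _).trans (by linarith [hK x' hx', hK x hx1])
      _ = 2 * K / (1 - R) * (1 - R) := by field_simp
      _ ≤ 2 * K / (1 - R) * ‖x' - x‖ := by
        have : 0 ≤ K := (norm_nonneg _).trans (hK x hx1)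
        gcongr
        exact not_lt.mp hclose

theorem norm_add_smul_apply_le (hd : DifferentiableOn ℂ h (ball 0 1))
    (hK : ∀ y ∈ ball (0 : X) 1, ‖h y‖ ≤ K) {ν : ℝ} (hν : NumericalRangeBound h R ν)
    (hν0 : 0 ≤ ν) (hR : R < 1) {x : X} {τ : ℂ} (hx : ‖x‖ + ‖τ‖ * K ≤ R) :
    ‖x + τ • h x‖ ≤ ‖x‖ + ‖τ‖ * ν + ‖τ‖ ^ 2 * (2 * K ^ 2 / (1 - R)) := by
  set z := x + τ • h x with hz
  have hR' : 0 < 1 - R := sub_pos.mpr hR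
  have hK0 : 0 ≤ K := (norm_nonneg _).trans (hK 0 (mem_ball_self one_pos))
  have hxR : ‖x‖ ≤ R := le_of_add_le_of_nonneg_left hx (by positivity)
  have hzx : ‖z - x‖ ≤ ‖τ‖ * K := by
    rw [hz, add_sub_cancel_left, norm_smul]
    exact mul_le_mul_of_nonneg_left (hK x (mem_ball_zero_iff.mpr (hxR.trans_lt hR))) (norm_nonneg τ)
  have hzR : ‖z‖ ≤ R := (norm_le_norm_add_norm_sub' z x).trans (by linarith)
  obtain hz0 | hz0 := eq_or_ne z 0
  · rw [hz0, norm_zero]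
    positivity
  obtain ⟨ℓ, hℓ1, hℓz⟩ := exists_dual_vector ℂ z (norm_ne_zero_iff.mpr hz0)
  have hℓ : ℓ ∈ normingFunctionals z := ⟨hℓz, hℓ1⟩
  have hlip : ‖ℓ (h z - h x)‖ ≤ 2 * K / (1 - R) * (‖τ‖ * K) :=
    (norm_apply_le_of_mem_normingFunctionals hℓ _).trans <|
      (norm_apply_sub_apply_le_of_bounded hd hK hR hxR
        (mem_ball_zero_iff.mpr (hzR.trans_lt hR))).trans (by gcongr)
  have hℓhx : ‖ℓ (h x)‖ ≤ ν + 2 * K / (1 - R) * (‖τ‖ * K) := by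
    rw [map_sub] at hlip
    calc ‖ℓ (h x)‖ ≤ ‖ℓ (h z)‖ + ‖ℓ (h z) - ℓ (h x)‖ := norm_le_insert _ _
      _ ≤ _ := add_le_add (hν z hz0 hzR ℓ hℓ) hlip
  calc ‖z‖ = (ℓ z).re := by simp [hℓz]
    _ = (ℓ x).re + (τ * ℓ (h x)).re := by simp [hz]
    _ ≤ ‖x‖ + ‖τ‖ * ‖ℓ (h x)‖ :=
      add_le_add ((Complex.re_le_norm _).trans (norm_apply_le_of_mem_normingFunctionals hℓ x))
        ((Complex.re_le_norm _).trans_eq (norm_mul _ _))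
    _ ≤ ‖x‖ + ‖τ‖ * (ν + 2 * K / (1 - R) * (‖τ‖ * K)) := by gcongr
    _ = _ := by ring

def eulerPolygon (h : X → X) (x₀ : X) (τ : ℂ) : ℕ → X
  | 0 => x₀
  | k + 1 => eulerPolygon h x₀ τ k + τ • h (eulerPolygon h x₀ τ k)

section eulerPolygon

variable {x₀ : X}

@[simp]
theorem eulerPolygon_zero (τ : ℂ) : eulerPolygon h x₀ τ 0 = x₀ := rfl

theorem eulerPolygon_succ (τ : ℂ) (k : ℕ) :
    eulerPolygon h x₀ τ (k + 1) = eulerPolygon h x₀ τ k + τ • h (eulerPolygon h x₀ τ k) := rfl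

@[simp]
theorem eulerPolygon_zero_step (k : ℕ) : eulerPolygon h x₀ 0 k = x₀ := by
  induction k with
  | zero => rfl
  | succ k ih => simp [eulerPolygon_succ, ih]

theorem norm_eulerPolygon_le {τ : ℂ} {r a B : ℝ} (ha : 0 ≤ a) (hx₀ : ‖x₀‖ ≤ r)
    (hstep : ∀ x : X, ‖x‖ ≤ B → ‖x + τ • h x‖ ≤ ‖x‖ + a) :
    ∀ k : ℕ, r + k * a ≤ B + a → ‖eulerPolygon h x₀ τ k‖ ≤ r + k * a
  | 0, _ => by simpa using hx₀
  | k + 1, hk => by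
    push_cast at hk ⊢
    have hk' : r + k * a ≤ B := by linarith
    have ih := norm_eulerPolygon_le ha hx₀ hstep k (by linarith)
    rw [eulerPolygon_succ]
    linarith [hstep _ (ih.trans hk')]

theorem differentiableOn_eulerPolygon {U : Set X} {S : Set ℂ} (hd : DifferentiableOn ℂ h U) :
    ∀ k : ℕ, (∀ j < k, MapsTo (eulerPolygon h x₀ · j) S U) →
      DifferentiableOn ℂ (eulerPolygon h x₀ · k) S
  | 0, _ => differentiableOn_const x₀
  | k + 1, hmaps => by
    have ih := differentiableOn_eulerPolygon hd k fun j hj ↦ hmaps j (hj.trans k.lt_succ_self)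
    simp only [eulerPolygon_succ]
    exact ih.add (differentiableOn_id.smul (hd.comp ih (hmaps k k.lt_succ_self)))

theorem hasDerivAt_eulerPolygon (hx₀ : DifferentiableAt ℂ h x₀) :
    ∀ k : ℕ, HasDerivAt (eulerPolygon h x₀ · k) ((k : ℂ) • h x₀) 0
  | 0 => by simpa using hasDerivAt_const (0 : ℂ) x₀
  | k + 1 => by
    have ih := hasDerivAt_eulerPolygon hx₀ k
    have hx₀' : HasFDerivAt h (fderiv ℂ h x₀) (eulerPolygon h x₀ 0 k) := by
      simpa using hx₀.hasFDerivAt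
    refine (ih.add ((hasDerivAt_id (0 : ℂ)).smul (hx₀'.comp_hasDerivAt 0 ih))).congr_deriv ?_
    simp only [id, Function.comp_apply, eulerPolygon_zero_step, zero_smul, one_smul]
    push_cast
    module

end eulerPolygon

theorem norm_eulerPolygon_le_of_numericalRangeBound (hd : DifferentiableOn ℂ h (ball 0 1))
    (hK : ∀ y ∈ ball (0 : X) 1, ‖h y‖ ≤ K) {ν : ℝ} (hν : NumericalRangeBound h R ν)
    (hν0 : 0 ≤ ν) (hR : R < 1) {r w : ℝ} {n : ℕ} {x₀ : X} (hx₀ : ‖x₀‖ ≤ r)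
    (hn : r + n * (w * ν + w ^ 2 * (2 * K ^ 2 / (1 - R))) + w * K ≤ R) {τ : ℂ} (hτ : ‖τ‖ ≤ w)
    {k : ℕ} (hk : k ≤ n) :
    ‖eulerPolygon h x₀ τ k‖ ≤ R - w * K := by
  have hR' : 0 < 1 - R := sub_pos.mpr hR
  have hw : 0 ≤ w := (norm_nonneg τ).trans hτ
  set a := w * ν + w ^ 2 * (2 * K ^ 2 / (1 - R))
  have ha : 0 ≤ a := by positivity
  have hstep : ∀ x : X, ‖x‖ ≤ R - w * K → ‖x + τ • h x‖ ≤ ‖x‖ + a := by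
    intro x hx
    have hK0 : 0 ≤ K := (norm_nonneg _).trans (hK 0 (mem_ball_self one_pos))
    calc ‖x + τ • h x‖ ≤ ‖x‖ + ‖τ‖ * ν + ‖τ‖ ^ 2 * (2 * K ^ 2 / (1 - R)) :=
          norm_add_smul_apply_le hd hK hν hν0 hR (by nlinarith)
      _ ≤ ‖x‖ + (w * ν + w ^ 2 * (2 * K ^ 2 / (1 - R))) := by rw [add_assoc]; gcongr
  have hkn : (k : ℝ) * a ≤ n * a := by gcongr
  exact (norm_eulerPolygon_le ha hx₀ hstep k (by linarith)).trans (by linarith)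

theorem mul_norm_apply_le_of_eulerPolygon_mem_ball (hd : DifferentiableOn ℂ h (ball 0 1))
    {x₀ : X} {n : ℕ} {w : ℝ} (hw : 0 < w)
    (hP : ∀ τ ∈ ball (0 : ℂ) w, ∀ k ≤ n, eulerPolygon h x₀ τ k ∈ ball (0 : X) 1) :
    n * w * ‖h x₀‖ ≤ 2 := by
  have hx₀ : x₀ ∈ ball (0 : X) 1 := by simpa using hP 0 (mem_ball_self hw) 0 n.zero_le
  have hmaps :
      MapsTo (eulerPolygon h x₀ · n) (ball 0 w) (closedBall (eulerPolygon h x₀ 0 n) 2) := by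
    intro τ hτ
    rw [eulerPolygon_zero_step, mem_closedBall, dist_eq_norm]
    linarith [norm_sub_le (eulerPolygon h x₀ τ n) x₀, mem_ball_zero_iff.mp (hP τ hτ n le_rfl),
      mem_ball_zero_iff.mp hx₀]
  have hderiv := Complex.norm_deriv_le_div_of_mapsTo_ball
    (differentiableOn_eulerPolygon hd n fun j hj τ hτ ↦ hP τ hτ j hj.le) hmaps hw
  rw [(hasDerivAt_eulerPolygon (hd.differentiableAt (isOpen_ball.mem_nhds hx₀)) n).deriv,
    norm_smul, Complex.norm_natCast, le_div_iff₀ hw] at hderiv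
  linarith

theorem norm_apply_le_two_div_of_numericalRangeBound (hd : DifferentiableOn ℂ h (ball 0 1))
    (hK : ∀ y ∈ ball (0 : X) 1, ‖h y‖ ≤ K) {ν : ℝ} (hν : NumericalRangeBound h R ν)
    (hν0 : 0 ≤ ν) (hR : R < 1) {r s : ℝ} {x₀ : X} (hx₀ : ‖x₀‖ ≤ r) (hs : 0 < s)
    (hsν : s * ν < R - r) :
    ‖h x₀‖ ≤ 2 / s := by
  set c := 2 * K ^ 2 / (1 - R) with hc
  have hR' : 0 < 1 - R := sub_pos.mpr hR
  have hK0 : 0 ≤ K := (norm_nonneg _).trans (hK 0 (mem_ball_self one_pos))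
  have hgap : 0 < R - r - s * ν := by linarith
  -- `n` Euler steps of size `w = s / n`, with `n` so large that the `O(w²)` terms are negligible
  obtain ⟨n, hn⟩ := exists_nat_gt (s * (s * c + K) / (R - r - s * ν))
  have hn0 : (0 : ℝ) < n := lt_of_le_of_lt (by positivity) hn
  set w := s / n with hw
  have hw0 : 0 < w := by positivity
  have hnw : n * w = s := by rw [hw]; field_simp
  have hnR : r + n * (w * ν + w ^ 2 * c) + w * K ≤ R := by
    have : w * (s * c + K) ≤ R - r - s * ν := by
      rw [hw, div_mul_eq_mul_div, div_le_iff₀ hn0]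
      rw [div_lt_iff₀ hgap] at hn
      linarith
    have : n * (w * ν + w ^ 2 * c) = s * ν + s * w * c := by rw [← hnw]; ring
    nlinarith
  have hP : ∀ τ ∈ ball (0 : ℂ) w, ∀ k ≤ n, eulerPolygon h x₀ τ k ∈ ball (0 : X) 1 :=
    fun τ hτ k hk ↦ mem_ball_zero_iff.mpr <|
      (norm_eulerPolygon_le_of_numericalRangeBound hd hK hν hν0 hR hx₀ hnR
        (mem_ball_zero_iff.mp hτ).le hk).trans_lt (by nlinarith)
  have := mul_norm_apply_le_of_eulerPolygon_mem_ball hd hw0 hP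
  rwa [hnw, ← le_div_iff₀' hs] at this

theorem norm_apply_mul_le_of_numericalRangeBound (hd : DifferentiableOn ℂ h (ball 0 1))
    (hK : ∀ y ∈ ball (0 : X) 1, ‖h y‖ ≤ K) {ν : ℝ} (hν : NumericalRangeBound h R ν)
    (hν0 : 0 ≤ ν) (hR : R < 1) {r : ℝ} {x₀ : X} (hx₀ : ‖x₀‖ ≤ r) :
    ‖h x₀‖ * (R - r) ≤ 2 * ν := by
  by_contra! hlt
  have hRr : 0 < R - r := by
    by_contra! hRr
    nlinarith [norm_nonneg (h x₀)]
  set m := (‖h x₀‖ * (R - r) + 2 * ν) / 2 with hm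
  have hm0 : 0 < m := by linarith
  have hs : 0 < 2 * (R - r) / m := by positivity
  have hsν : 2 * (R - r) / m * ν < R - r := by
    rw [div_mul_eq_mul_div, div_lt_iff₀ hm0]
    nlinarith
  have := norm_apply_le_two_div_of_numericalRangeBound hd hK hν hν0 hR hx₀ hs hsν
  rw [div_div_eq_mul_div, mul_div_mul_left _ _ two_ne_zero, le_div_iff₀ hRr] at this
  linarith

end NumericalRange

namespace IsSchwarzMapping

variable {g : X → X}

theorem norm_apply_le (hg : IsSchwarzMapping g) {z : X} (hz : z ∈ ball (0 : X) 1) :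
    ‖g z‖ ≤ ‖z‖ :=
  Complex.norm_le_norm_of_mapsTo_ball hg.1 (hg.2.1.mono_right ball_subset_closedBall) hg.2.2
    (mem_ball_zero_iff.mp hz)

theorem norm_fderiv_zero_le_one (hg : IsSchwarzMapping g) : ‖fderiv ℂ g 0‖ ≤ 1 :=
  Complex.norm_fderiv_le_one_of_mapsTo_ball hg.1
    (by simpa [hg.2.2] using hg.2.1.mono_right ball_subset_closedBall) one_pos

theorem re_apply_sub_div_nonneg (hg : IsSchwarzMapping g) {y : X} {ℓ : X →L[ℂ] ℂ}
    (hℓ : ℓ ∈ normingFunctionals y) {l : ℂ} (hl0 : l ≠ 0) (hl : l • y ∈ ball (0 : X) 1) :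
    0 ≤ (ℓ (l • y - g (l • y)) / l).re := by
  have hgl : ‖ℓ (g (l • y)) / l‖ ≤ ‖y‖ := by
    rw [norm_div, div_le_iff₀ (norm_pos_iff.mpr hl0)]
    calc ‖ℓ (g (l • y))‖ ≤ ‖g (l • y)‖ := norm_apply_le_of_mem_normingFunctionals hℓ _
      _ ≤ ‖l • y‖ := hg.norm_apply_le hl
      _ = ‖y‖ * ‖l‖ := by rw [norm_smul, mul_comm]
  have : ℓ (l • y - g (l • y)) / l = ‖y‖ - ℓ (g (l • y)) / l := by
    simp only [map_sub, map_smul, hℓ.1, smul_eq_mul]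
    field_simp
  rw [this, Complex.sub_re, Complex.ofReal_re, sub_nonneg]
  exact (Complex.re_le_norm _).trans hgl

theorem norm_apply_sub_le_of_mem_normingFunctionals (hg : IsSchwarzMapping g) {y : X}
    (hy : y ∈ ball (0 : X) 1) {ℓ : X →L[ℂ] ℂ} (hℓ : ℓ ∈ normingFunctionals y) :
    ‖ℓ (y - g y)‖ ≤ ‖1 - fderiv ℂ g 0‖ * ‖y‖ * (1 + ‖y‖) / (1 - ‖y‖) := by
  obtain rfl | hy0 := eq_or_ne y 0
  · simp [hg.2.2]
  have hy1 : ‖y‖ < 1 := mem_ball_zero_iff.mp hy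
  have hyn : 0 < ‖y‖ := norm_pos_iff.mpr hy0
  have hmaps : MapsTo (fun l : ℂ ↦ l • y) (ball 0 ‖y‖⁻¹) (ball 0 1) := fun l hl ↦ by
    simpa [norm_smul, ← lt_div_iff₀ hyn, div_eq_mul_inv] using hl
  set F : ℂ → ℂ := fun l ↦ ℓ (l • y - g (l • y)) with hF
  have hFd : DifferentiableOn ℂ F (ball 0 ‖y‖⁻¹) :=
    ℓ.differentiable.comp_differentiableOn <| (differentiable_id.smul_const y).differentiableOn.sub
      (hg.1.comp (differentiable_id.smul_const y).differentiableOn hmaps)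
  have hFderiv : HasDerivAt F (ℓ (y - fderiv ℂ g 0 y)) 0 := by
    have hline : HasDerivAt (fun l : ℂ ↦ l • y) y 0 := by
      simpa using (hasDerivAt_id (0 : ℂ)).smul_const y
    have hg0 : HasFDerivAt g (fderiv ℂ g 0) ((0 : ℂ) • y) := by
      rw [zero_smul]
      exact (hg.1.differentiableAt (ball_mem_nhds 0 one_pos)).hasFDerivAt
    exact ℓ.hasFDerivAt.comp_hasDerivAt 0 (hline.sub (hg0.comp_hasDerivAt 0 hline))
  have hre : ∀ l ∈ ball (0 : ℂ) ‖y‖⁻¹, l ≠ 0 → 0 ≤ (F l / l).re := fun l hl hl0 ↦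
    hg.re_apply_sub_div_nonneg hℓ hl0 (hmaps hl)
  have h1 : (1 : ℂ) ∈ ball (0 : ℂ) ‖y‖⁻¹ := by simpa using one_lt_inv_iff₀.mpr ⟨hyn, hy1⟩
  have hbound := Complex.norm_le_of_re_div_nonneg hFd (by simp [hF, hg.2.2]) hre h1
  have hderiv : ‖deriv F 0‖ ≤ ‖1 - fderiv ℂ g 0‖ * ‖y‖ := by
    rw [hFderiv.deriv]
    exact (norm_apply_le_of_mem_normingFunctionals hℓ _).trans ((1 - fderiv ℂ g 0).le_opNorm y)
  calc ‖ℓ (y - g y)‖ = ‖F 1‖ := by simp [hF]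
    _ ≤ ‖deriv F 0‖ * (‖y‖⁻¹ + 1) / (‖y‖⁻¹ - 1) := by simpa using hbound
    _ ≤ ‖1 - fderiv ℂ g 0‖ * ‖y‖ * (‖y‖⁻¹ + 1) / (‖y‖⁻¹ - 1) := by
      gcongr
      exact sub_nonneg.mpr (one_le_inv₀ hyn |>.mpr hy1.le)
    _ = _ := by field_simp

theorem norm_sub_apply_le (hg : IsSchwarzMapping g) {r : ℝ} (hr : r < 1) {x : X}
    (hx : ‖x‖ ≤ r) : ‖x - g x‖ ≤ 16 / (1 - r) ^ 2 * ‖1 - fderiv ℂ g 0‖ := by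
  set ε := ‖1 - fderiv ℂ g 0‖
  set R := (1 + r) / 2 with hR
  have hr' : 0 < 1 - r := sub_pos.mpr hr
  have hRr : R - r = (1 - r) / 2 := by rw [hR]; ring
  have hK : ∀ y ∈ ball (0 : X) 1, ‖y - g y‖ ≤ 2 := fun y hy ↦
    (norm_sub_le _ _).trans (by linarith [hg.norm_apply_le hy, mem_ball_zero_iff.mp hy])
  have hν : NumericalRangeBound (fun y ↦ y - g y) R (4 * ε / (1 - r)) := by
    intro y _ hyR ℓ hℓ
    have hy1 : ‖y‖ < 1 := by linarith
    calc ‖ℓ (y - g y)‖ ≤ ε * ‖y‖ * (1 + ‖y‖) / (1 - ‖y‖) :=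
          hg.norm_apply_sub_le_of_mem_normingFunctionals (mem_ball_zero_iff.mpr hy1) hℓ
      _ ≤ ε * 1 * (1 + 1) / (1 - R) := by gcongr; linarith
      _ = 4 * ε / (1 - r) := by rw [show 1 - R = (1 - r) / 2 by linarith]; field_simp; ring
  have := norm_apply_mul_le_of_numericalRangeBound (h := fun y ↦ y - g y)
    (differentiableOn_id.sub hg.1) hK hν (by positivity) (by linarith) hx
  rw [hRr] at this
  calc ‖x - g x‖ = ‖x - g x‖ * ((1 - r) / 2) * (2 / (1 - r)) := by field_simp
    _ ≤ 2 * (4 * ε / (1 - r)) * (2 / (1 - r)) := by gcongr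
    _ = 16 / (1 - r) ^ 2 * ε := by field_simp; ring

end IsSchwarzMapping

end

theorem schwarz_family_lipschitz_general {X : Type*} [NormedAddCommGroup X] [NormedSpace ℂ X]
    [CompleteSpace X] (A : X →L[ℂ] X)
    (v : ℝ → ℝ → X → X)
    (hv_schwarz : ∀ s t : ℝ, 0 ≤ s → s ≤ t → IsSchwarzMapping (v s t))
    (hv_semigroup : ∀ s t u : ℝ, 0 ≤ s → s ≤ t → t ≤ u →
      ∀ z ∈ ball (0 : X) 1, v t u (v s t z) = v s u z)
    (hv_deriv : ∀ s t : ℝ, 0 ≤ s → s ≤ t →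
      fderiv ℂ (v s t) 0 = NormedSpace.exp ((-(t - s) : ℂ) • A)) :
    ∀ r : ℝ, r ∈ Set.Ioo (0 : ℝ) 1 → ∃ M > (0 : ℝ),
      ∀ z : X, ‖z‖ ≤ r → ∀ s t₁ t₂ : ℝ, 0 ≤ s → s ≤ t₁ → t₁ < t₂ →
        ‖v s t₁ z - v s t₂ z‖ ≤ M * ‖A‖ * (t₂ - t₁) := by
  intro r hr
  refine ⟨32 / (1 - r) ^ 2, by have := sub_pos.mpr hr.2; positivity, ?_⟩
  intro z hz s t₁ t₂ hs hst₁ ht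
  have hz1 : z ∈ ball (0 : X) 1 := mem_ball_zero_iff.mpr (hz.trans_lt hr.2)
  have hg := hv_schwarz t₁ t₂ (hs.trans hst₁) ht.le
  have hε : ‖1 - fderiv ℂ (v t₁ t₂) 0‖ ≤ 2 * (‖A‖ * (t₂ - t₁)) := by
    have hnorm : ‖(-(t₂ - t₁) : ℂ) • A‖ = ‖A‖ * (t₂ - t₁) := by
      rw [norm_smul, norm_neg, ← Complex.ofReal_sub, Complex.norm_real,
        Real.norm_of_nonneg (by linarith), mul_comm]
    rcases le_or_gt (‖A‖ * (t₂ - t₁)) 1 with hsmall | hlarge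
    · rw [hv_deriv t₁ t₂ (hs.trans hst₁) ht.le, norm_sub_rev, ← hnorm]
      exact norm_exp_sub_one_le_two_mul (𝕂 := ℂ) (hnorm ▸ hsmall)
    · calc _ ≤ ‖(1 : X →L[ℂ] X)‖ + ‖fderiv ℂ (v t₁ t₂) 0‖ := norm_sub_le _ _
        _ ≤ 1 + 1 := add_le_add ContinuousLinearMap.norm_id_le hg.norm_fderiv_zero_le_one
        _ ≤ _ := by linarith
  rw [← hv_semigroup s t₁ t₂ hs hst₁ ht.le z hz1]
  calc _ ≤ 16 / (1 - r) ^ 2 * ‖1 - fderiv ℂ (v t₁ t₂) 0‖ :=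
        hg.norm_sub_apply_le hr.2 (((hv_schwarz s t₁ hs hst₁).norm_apply_le hz1).trans hz)
    _ ≤ 16 / (1 - r) ^ 2 * (2 * (‖A‖ * (t₂ - t₁))) := by gcongr
    _ = 32 / (1 - r) ^ 2 * ‖A‖ * (t₂ - t₁) := by ring

theorem schwarz_family_lipschitz {X : Type*} [NormedAddCommGroup X] [NormedSpace ℂ X]
    [CompleteSpace X] (A : X →L[ℂ] X) (hm : 0 < mLower A)
    (v : ℝ → ℝ → X → X)
    (hv_schwarz : ∀ s t : ℝ, 0 ≤ s → s ≤ t → IsSchwarzMapping (v s t))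
    (hv_semigroup : ∀ s t u : ℝ, 0 ≤ s → s ≤ t → t ≤ u →
      ∀ z ∈ ball (0 : X) 1, v t u (v s t z) = v s u z)
    (hv_deriv : ∀ s t : ℝ, 0 ≤ s → s ≤ t →
      fderiv ℂ (v s t) 0 = NormedSpace.exp ((-(t - s) : ℂ) • A)) :
    ∀ r : ℝ, r ∈ Set.Ioo (0 : ℝ) 1 → ∃ M > (0 : ℝ),
      ∀ z : X, ‖z‖ ≤ r → ∀ s t₁ t₂ : ℝ, 0 ≤ s → s ≤ t₁ → t₁ < t₂ →
        ‖v s t₁ z - v s t₂ z‖ ≤ M * ‖A‖ * (t₂ - t₁) :=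
  schwarz_family_lipschitz_general A v hv_schwarz hv_semigroup hv_deriv
end
end

section
/- Let $X$ be a complex Banach space with unit ball $\mathbb{B}$, let $A \in L(X)$ with $m(A) > 0$, and let $f(z,t)$ be an $A$-normalized biholomorphic subordination chain on $\mathbb{B} \times [0,\infty)$ such that $\|e^{-tA} f(z,t)\| \leq M$ for $\|z\| \leq \rho$ and all $t \geq 0$, for some $\rho \in (0,1)$ and $M > 0$. Then the Loewner range is all of $X$: $\bigcup_{t \geq 0} f(\mathbb{B}, t) = X$. -/
/-!
Fix `y ∈ X` and normalize the chain: `g_t = e^{-tA} ∘ f(·, t)` is holomorphic on the ball of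
radius `ρ`, bounded by `M` there, with `g_t(0) = 0` and `Dg_t(0) = id`. As `g_t - id` vanishes to
second order at `0`, the Schwarz lemma bounds it by `(M + ρ) (‖z‖ / ρ)²`; applied once more on
small balls, it makes `g_t - id` `1/2`-Lipschitz on a ball of radius `r` independent of `t`, so by
the quantitative inverse function theorem every `g_t` covers the closed ball of radius `r/4`.
Since `m(A) > 0`, testing against a norming functional gives `‖v + hAv‖ ≥ (1 + h m(A)) ‖v‖`, which
makes `e^{-hA}` a strict contraction for small `h > 0`. Hence `‖e^{-tA} y‖ ≤ r/4` for some `t`,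
and `y = f(z, t)` for the preimage `z` of `e^{-tA} y` under `g_t`.
-/

open Metric Set

noncomputable section

open Topology NormedSpace

section Exponential

variable {𝕂 𝔸 : Type*} [RCLike 𝕂] [NormedRing 𝔸] [NormedAlgebra 𝕂 𝔸] [CompleteSpace 𝔸]

theorem exp_add_smul (x : 𝔸) (s t : 𝕂) : exp ((s + t) • x) = exp (s • x) * exp (t • x) := by
  have hx : ∀ y : 𝔸, y ∈ eball (0 : 𝔸) (expSeries 𝕂 𝔸).radius := fun y => by
    simp [expSeries_radius_eq_top]
  rw [add_smul]
  exact exp_add_of_commute_of_mem_ball (((Commute.refl x).smul_left s).smul_right t) (hx _) (hx _)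

theorem exp_smul_mul_exp_neg_smul (x : 𝔸) (t : 𝕂) : exp (t • x) * exp ((-t) • x) = 1 := by
  rw [← exp_add_smul, add_neg_cancel, zero_smul, exp_zero]

theorem exp_neg_smul_mul_exp_smul (x : 𝔸) (t : 𝕂) : exp ((-t) • x) * exp (t • x) = 1 := by
  simpa using exp_smul_mul_exp_neg_smul x (-t)

theorem norm_exp_succ_mul_smul_le (x : 𝔸) (t : 𝕂) (n : ℕ) :
    ‖exp (((n + 1 : ℕ) * t) • x)‖ ≤ ‖exp (t • x)‖ ^ (n + 1) := by
  induction n with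
  | zero => simp
  | succ n ih =>
    calc ‖exp (((n + 1 + 1 : ℕ) * t) • x)‖ = ‖exp (((n + 1 : ℕ) * t) • x) * exp (t • x)‖ := by
          rw [← exp_add_smul]; push_cast; ring_nf
      _ ≤ ‖exp (t • x)‖ ^ (n + 1) * ‖exp (t • x)‖ :=
          (norm_mul_le _ _).trans (mul_le_mul_of_nonneg_right ih (norm_nonneg _))
      _ = ‖exp (t • x)‖ ^ (n + 1 + 1) := (pow_succ _ _).symm

end Exponential

section LowerNumericalBound

variable {X : Type*} [NormedAddCommGroup X] [NormedSpace ℂ X]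

theorem mLower_le_re {A : X →L[ℂ] X} {z : X} {ℓ : X →L[ℂ] ℂ} (hz : ‖z‖ = 1)
    (hℓ : ℓ ∈ normingFunctionals z) : mLower A ≤ (ℓ (A z)).re := by
  refine csInf_le ⟨-‖A‖, ?_⟩ ⟨z, ℓ, hz, hℓ, rfl⟩
  rintro x ⟨z, ℓ, hz, ⟨-, hℓ1⟩, rfl⟩
  have : ‖ℓ (A z)‖ ≤ ‖A‖ := by simpa [hℓ1] using ℓ.le_opNorm_of_le (A.le_opNorm_of_le hz.le)
  linarith [neg_abs_le (ℓ (A z)).re, Complex.abs_re_le_norm (ℓ (A z))]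

theorem one_add_mul_mLower_mul_norm_le (A : X →L[ℂ] X) {h : ℝ} (hh : 0 ≤ h) (v : X) :
    (1 + h * mLower A) * ‖v‖ ≤ ‖v + (h : ℂ) • A v‖ := by
  rcases eq_or_ne v 0 with rfl | hv
  · simp
  have hv0 : 0 < ‖v‖ := norm_pos_iff.2 hv
  obtain ⟨ℓ, hℓ1, hℓv⟩ := exists_dual_vector ℂ v hv0.ne'
  set u : X := ((‖v‖⁻¹ : ℝ) : ℂ) • v
  have hu : ‖u‖ = 1 := by simp [u, norm_smul, hv0.ne']
  have hℓu : ℓ ∈ normingFunctionals u := ⟨by rw [hu]; simp [u, hℓv, hv0.ne'], hℓ1⟩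
  have hm : mLower A * ‖v‖ ≤ (ℓ (A v)).re := by
    have := mLower_le_re (A := A) hu hℓu
    rw [map_smul, map_smul, smul_eq_mul, Complex.re_ofReal_mul, le_inv_mul_iff₀ hv0] at this
    linarith
  calc (1 + h * mLower A) * ‖v‖ = ‖v‖ + h * (mLower A * ‖v‖) := by ring
    _ ≤ ‖v‖ + h * (ℓ (A v)).re := by gcongr
    _ = (ℓ (v + (h : ℂ) • A v)).re := by simp [hℓv]
    _ ≤ ‖ℓ (v + (h : ℂ) • A v)‖ := Complex.re_le_norm _
    _ ≤ ‖v + (h : ℂ) • A v‖ := by simpa [hℓ1] using ℓ.le_opNorm (v + (h : ℂ) • A v)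

variable [CompleteSpace X]

theorem exists_pos_mul_norm_le_norm_exp_smul_apply (A : X →L[ℂ] X) (hm : 0 < mLower A) :
    ∃ h : ℝ, 0 < h ∧ ∀ v : X, (1 + h * mLower A / 2) * ‖v‖ ≤ ‖exp ((h : ℂ) • A) v‖ := by
  have hder : HasDerivAt (fun u : ℂ => exp (u • A)) A 0 := by
    simpa using hasDerivAt_exp_smul_const (𝕂 := ℂ) A 0
  obtain ⟨δ, hδ, hsmall⟩ :=
    Metric.eventually_nhds_iff.1 ((hasDerivAt_iff_isLittleO.1 hder).def (half_pos hm))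
  refine ⟨δ / 2, half_pos hδ, fun v => ?_⟩
  set h := δ / 2
  have hh : 0 < h := half_pos hδ
  set R : X →L[ℂ] X := exp ((h : ℂ) • A) - 1 - (h : ℂ) • A
  have hR : ‖R‖ ≤ mLower A / 2 * h := by
    simpa [R, abs_of_pos hh] using
      hsmall (y := (h : ℂ)) (by simp [h, abs_of_pos hδ]; linarith)
  have hexp : exp ((h : ℂ) • A) v = (v + (h : ℂ) • A v) + R v := by simp [R]
  calc (1 + h * mLower A / 2) * ‖v‖ = (1 + h * mLower A) * ‖v‖ - mLower A / 2 * h * ‖v‖ := by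
        ring
    _ ≤ ‖v + (h : ℂ) • A v‖ - ‖R v‖ :=
        sub_le_sub (one_add_mul_mLower_mul_norm_le A hh.le v)
          ((R.le_opNorm v).trans (mul_le_mul_of_nonneg_right hR (norm_nonneg v)))
    _ ≤ ‖exp ((h : ℂ) • A) v‖ := by
        rw [hexp]; simpa using norm_sub_norm_le (v + (h : ℂ) • A v) (-R v)

theorem exists_norm_exp_neg_smul_lt (A : X →L[ℂ] X) (hm : 0 < mLower A) {ε : ℝ} (hε : 0 < ε) :
    ∃ t : ℝ, 0 ≤ t ∧ ‖exp ((-t : ℂ) • A)‖ < ε := by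
  obtain ⟨h, hh, hexp⟩ := exists_pos_mul_norm_le_norm_exp_smul_apply A hm
  set q := 1 + h * mLower A / 2
  have hq : 1 < q := lt_add_of_pos_right 1 (by positivity)
  have hcontr : ‖exp ((-h : ℂ) • A)‖ ≤ q⁻¹ := by
    refine ContinuousLinearMap.opNorm_le_bound _ (by positivity) fun u => ?_
    have := hexp (exp ((-h : ℂ) • A) u)
    rw [← mul_apply_eq_comp, exp_smul_mul_exp_neg_smul A (h : ℂ),
      one_apply_eq_self] at this
    rwa [inv_mul_eq_div, le_div_iff₀' (by positivity)]
  obtain ⟨n, hn⟩ := exists_pow_lt_of_lt_one hε (inv_lt_one_of_one_lt₀ hq)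
  refine ⟨(n + 1 : ℕ) * h, by positivity, ?_⟩
  calc ‖exp ((-((n + 1 : ℕ) * h : ℝ) : ℂ) • A)‖ = ‖exp (((n + 1 : ℕ) * (-h : ℂ)) • A)‖ := by
        push_cast; ring_nf
    _ ≤ ‖exp ((-h : ℂ) • A)‖ ^ (n + 1) := norm_exp_succ_mul_smul_le A (-h : ℂ) n
    _ ≤ q⁻¹ ^ (n + 1) := by gcongr
    _ ≤ q⁻¹ ^ n := pow_le_pow_of_le_one (by positivity) (inv_le_one_of_one_le₀ hq.le) n.le_succ
    _ < ε := hn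

end LowerNumericalBound

namespace Complex

variable {E F : Type*} [NormedAddCommGroup E] [NormedSpace ℂ E] [NormedAddCommGroup F]
  [NormedSpace ℂ F] {e : E → F} {R B : ℝ}

theorem norm_le_mul_div_sq_of_mapsTo_ball_of_hasFDerivAt_zero
    (hd : DifferentiableOn ℂ e (ball 0 R)) (h0 : e 0 = 0)
    (he' : HasFDerivAt e (0 : E →L[ℂ] F) 0) (hmaps : MapsTo e (ball 0 R) (closedBall 0 B))
    {w : E} (hw : w ∈ ball 0 R) : ‖e w‖ ≤ B * (‖w‖ / R) ^ 2 := by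
  have ho : (fun x => e x - e 0) =o[𝓝 0] fun x => ‖x - 0‖ ^ 1 := by
    simpa [h0] using he'.isLittleO.norm_right
  simpa [h0] using dist_le_mul_div_pow_of_mapsTo_ball_of_isLittleO hd (h0 ▸ hmaps) ho hw

theorem norm_sub_le_of_mapsTo_ball_of_hasFDerivAt_zero
    (hd : DifferentiableOn ℂ e (ball 0 R)) (h0 : e 0 = 0)
    (he' : HasFDerivAt e (0 : E →L[ℂ] F) 0) (hmaps : MapsTo e (ball 0 R) (closedBall 0 B))
    {r : ℝ} (hr : 3 * r ≤ R) {z z' : E} (hz : z ∈ ball 0 r) (hz' : z' ∈ ball 0 r) :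
    ‖e z - e z'‖ ≤ 9 * B * r / R ^ 2 * ‖z - z'‖ := by
  have hr0 : 0 < r := pos_of_mem_ball hz
  have hR : 0 < R := by linarith
  have hB : 0 ≤ B := by simpa [h0] using hmaps (mem_ball_self hR)
  have hsub : ball z' (2 * r) ⊆ ball 0 (3 * r) :=
    ball_subset_ball' (by linarith [mem_ball.1 hz'])
  have hsmall : ∀ w ∈ ball (0 : E) (3 * r), ‖e w‖ ≤ B * (3 * r / R) ^ 2 := fun w hw =>
    (norm_le_mul_div_sq_of_mapsTo_ball_of_hasFDerivAt_zero hd h0 he' hmaps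
      (ball_subset_ball hr hw)).trans (by gcongr; exact (mem_ball_zero_iff.1 hw).le)
  have hmaps' : MapsTo e (ball z' (2 * r)) (closedBall (e z') (2 * (B * (3 * r / R) ^ 2))) :=
    fun w hw => by
      rw [mem_closedBall, dist_eq_norm, two_mul]
      exact (norm_sub_le _ _).trans
        (add_le_add (hsmall w (hsub hw)) (hsmall z' (hsub (mem_ball_self (by positivity)))))
  have hz2 : z ∈ ball z' (2 * r) := by
    rw [mem_ball]
    linarith [dist_triangle z 0 z', mem_ball.1 hz, mem_ball'.1 hz']
  calc ‖e z - e z'‖ = dist (e z) (e z') := (dist_eq_norm _ _).symm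
    _ ≤ 2 * (B * (3 * r / R) ^ 2) / (2 * r) * dist z z' :=
        dist_le_div_mul_dist_of_mapsTo_ball (hd.mono (hsub.trans (ball_subset_ball hr))) hmaps' hz2
    _ = 9 * B * r / R ^ 2 * ‖z - z'‖ := by rw [dist_eq_norm]; field_simp; ring

end Complex

theorem approximatesLinearOn_id_of_mapsTo_ball {E : Type*} [NormedAddCommGroup E]
    [NormedSpace ℂ E] {g : E → E} {ρ M r : ℝ} (hρ : 0 < ρ) (hM : 0 ≤ M)
    (hr : 18 * (M + ρ) * r ≤ ρ ^ 2) (hg : DifferentiableOn ℂ g (ball 0 ρ)) (hg0 : g 0 = 0)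
    (hg' : HasFDerivAt g (ContinuousLinearMap.id ℂ E) 0)
    (hmaps : MapsTo g (ball 0 ρ) (closedBall 0 M)) :
    ApproximatesLinearOn g (ContinuousLinearMap.id ℂ E) (ball 0 r) (1 / 2) := by
  have h3r : 3 * r ≤ ρ := by nlinarith
  have he : MapsTo (fun z => g z - z) (ball 0 ρ) (closedBall 0 (M + ρ)) := fun z hz =>
    mem_closedBall_zero_iff.2 <| (norm_sub_le _ _).trans <|
      add_le_add (mem_closedBall_zero_iff.1 (hmaps hz)) (mem_ball_zero_iff.1 hz).le
  intro z hz z' hz'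
  calc ‖g z - g z' - (z - z')‖ = ‖(g z - z) - (g z' - z')‖ := by congr 1; abel
    _ ≤ 9 * (M + ρ) * r / ρ ^ 2 * ‖z - z'‖ :=
        Complex.norm_sub_le_of_mapsTo_ball_of_hasFDerivAt_zero (hg.sub differentiableOn_id)
          (by simp [hg0]) (by simpa using hg'.sub (hasFDerivAt_id 0)) he h3r hz hz'
    _ ≤ ((1 / 2 : NNReal) : ℝ) * ‖z - z'‖ := by
        gcongr
        rw [div_le_iff₀ (by positivity)]
        push_cast
        linarith

theorem ApproximatesLinearOn.surjOn_closedBall_of_id {𝕜 E : Type*} [NontriviallyNormedField 𝕜]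
    [NormedAddCommGroup E] [NormedSpace 𝕜 E] [CompleteSpace E] {g : E → E} {s : Set E}
    {c : NNReal} (hg : ApproximatesLinearOn g (ContinuousLinearMap.id 𝕜 E) s c) {b : E} {ε : ℝ}
    (hε0 : 0 ≤ ε) (hε : closedBall b ε ⊆ s) :
    SurjOn g (closedBall b ε) (closedBall (g b) ((1 - c) * ε)) := by
  simpa using hg.surjOn_closedBall_of_nonlinearRightInverse ⟨id, 1, fun y => by simp, fun y => rfl⟩
    hε0 hε

theorem mem_image_ball_of_norm_inverse_apply_le {X : Type*} [NormedAddCommGroup X]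
    [NormedSpace ℂ X] [CompleteSpace X] {L L' : X →L[ℂ] X} (hLL' : L * L' = 1)
    (hL'L : L' * L = 1) {φ : X → X} {ρ M r : ℝ} (hρ : 0 < ρ) (hM : 0 ≤ M) (hr0 : 0 < r)
    (hr : 18 * (M + ρ) * r ≤ ρ ^ 2) (hφ : DifferentiableOn ℂ φ (ball 0 ρ)) (hφ0 : φ 0 = 0)
    (hφ' : fderiv ℂ φ 0 = L) (hbd : ∀ z : X, ‖z‖ ≤ ρ → ‖L' (φ z)‖ ≤ M) {y : X}
    (hy : ‖L' y‖ ≤ r / 4) : y ∈ φ '' ball 0 ρ := by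
  have hrρ : r / 2 < ρ := by nlinarith
  have hL'φ : HasFDerivAt (L' ∘ φ) (ContinuousLinearMap.id ℂ X) 0 := by
    have hD := (hφ.differentiableAt (ball_mem_nhds 0 hρ)).hasFDerivAt
    rw [hφ'] at hD
    simpa [← ContinuousLinearMap.mul_def, hL'L, ContinuousLinearMap.one_def] using
      L'.hasFDerivAt.comp 0 hD
  have happrox := approximatesLinearOn_id_of_mapsTo_ball hρ hM hr
    (L'.differentiable.comp_differentiableOn hφ) (by simp [hφ0]) hL'φ
    (fun z hz => mem_closedBall_zero_iff.2 (hbd z (mem_ball_zero_iff.1 hz).le))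
  have hL'y : L' y ∈ closedBall (L' (φ 0)) ((1 - ((1 / 2 : NNReal) : ℝ)) * (r / 2)) := by
    rw [hφ0, map_zero, mem_closedBall_zero_iff]
    convert hy using 1
    push_cast
    ring
  obtain ⟨z, hz, hzy⟩ := happrox.surjOn_closedBall_of_id (by positivity)
    (closedBall_subset_ball (half_lt_self hr0)) hL'y
  have hL'_inj : Function.Injective L' :=
    Function.LeftInverse.injective (g := L) fun x => by
      rw [← mul_apply_eq_comp, hLL', one_apply_eq_self]
  exact ⟨z, closedBall_subset_ball hrρ hz, hL'_inj hzy⟩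

theorem loewner_range_eq_univ_general {X : Type*} [NormedAddCommGroup X] [NormedSpace ℂ X]
    [CompleteSpace X] (A : X →L[ℂ] X) (hm : 0 < mLower A)
    (f : ℝ → X → X) (ρ M : ℝ) (hρ : ρ ∈ Set.Ioo (0 : ℝ) 1) (hM : 0 < M)
    -- `f` is a subordination chain:
    (hf_hol : ∀ t : ℝ, 0 ≤ t → DifferentiableOn ℂ (f t) (ball (0 : X) 1))
    (hf0 : ∀ t : ℝ, 0 ≤ t → f t 0 = 0)
    -- `A`-normalized:
    (hf_norm : ∀ t : ℝ, 0 ≤ t → fderiv ℂ (f t) 0 = NormedSpace.exp ((t : ℂ) • A))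
    -- uniform bound:
    (hf_bd : ∀ t : ℝ, 0 ≤ t → ∀ z : X, ‖z‖ ≤ ρ →
      ‖NormedSpace.exp ((-t : ℂ) • A) (f t z)‖ ≤ M) :
    (⋃ t ∈ Set.Ici (0 : ℝ), f t '' ball (0 : X) 1) = Set.univ := by
  obtain ⟨hρ0, hρ1⟩ := hρ
  set r := ρ ^ 2 / (18 * (M + ρ))
  have hr : 18 * (M + ρ) * r ≤ ρ ^ 2 := (mul_div_cancel₀ _ (by positivity)).le
  refine eq_univ_of_forall fun y => mem_iUnion₂.2 ?_
  obtain ⟨t, ht, hT⟩ := exists_norm_exp_neg_smul_lt A hm (ε := r / 4 / (‖y‖ + 1)) (by positivity)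
  have hTy : ‖exp ((-t : ℂ) • A) y‖ ≤ r / 4 := by
    calc ‖exp ((-t : ℂ) • A) y‖ ≤ ‖exp ((-t : ℂ) • A)‖ * (‖y‖ + 1) :=
          ContinuousLinearMap.le_opNorm_of_le _ (by linarith)
      _ ≤ r / 4 / (‖y‖ + 1) * (‖y‖ + 1) := by gcongr
      _ = r / 4 := by field_simp
  refine ⟨t, ht, image_mono (ball_subset_ball hρ1.le) ?_⟩
  exact mem_image_ball_of_norm_inverse_apply_le (exp_smul_mul_exp_neg_smul A (t : ℂ))
    (exp_neg_smul_mul_exp_smul A (t : ℂ)) hρ0 hM.le (by positivity) hr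
    ((hf_hol t ht).mono (ball_subset_ball hρ1.le)) (hf0 t ht) (hf_norm t ht) (hf_bd t ht) hTy

theorem loewner_range_eq_univ {X : Type*} [NormedAddCommGroup X] [NormedSpace ℂ X]
    [CompleteSpace X] (A : X →L[ℂ] X) (hm : 0 < mLower A)
    (f : ℝ → X → X) (ρ M : ℝ) (hρ : ρ ∈ Set.Ioo (0 : ℝ) 1) (hM : 0 < M)
    -- `f` is a subordination chain:
    (hf_hol : ∀ t : ℝ, 0 ≤ t → DifferentiableOn ℂ (f t) (ball (0 : X) 1))
    (hf0 : ∀ t : ℝ, 0 ≤ t → f t 0 = 0)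
    (hf_sub : ∀ s t : ℝ, 0 ≤ s → s ≤ t → ∃ w : X → X, IsSchwarzMapping w ∧
      ∀ z ∈ ball (0 : X) 1, f s z = f t (w z))
    -- `A`-normalized:
    (hf_norm : ∀ t : ℝ, 0 ≤ t → fderiv ℂ (f t) 0 = NormedSpace.exp ((t : ℂ) • A))
    -- biholomorphic onto the image:
    (hf_inj : ∀ t : ℝ, 0 ≤ t → InjOn (f t) (ball (0 : X) 1))
    (hf_open : ∀ t : ℝ, 0 ≤ t → IsOpen (f t '' ball (0 : X) 1))
    (hf_inv : ∀ t : ℝ, 0 ≤ t → ∃ g : X → X,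
      DifferentiableOn ℂ g (f t '' ball (0 : X) 1) ∧ ∀ z ∈ ball (0 : X) 1, g (f t z) = z)
    -- uniform bound:
    (hf_bd : ∀ t : ℝ, 0 ≤ t → ∀ z : X, ‖z‖ ≤ ρ →
      ‖NormedSpace.exp ((-t : ℂ) • A) (f t z)‖ ≤ M) :
    (⋃ t ∈ Set.Ici (0 : ℝ), f t '' ball (0 : X) 1) = Set.univ :=
  loewner_range_eq_univ_general A hm f ρ M hρ hM hf_hol hf0 hf_norm hf_bd
end
end

section
/- Under the same hypotheses (reflexive $X$, $m(A) > 0$, Schwarz family $v(z,s,t)$ with semigroup property, $v(z,s,t)\neq 0$ for $z\neq 0$, $Dv(0,s,t) = e^{-(t-s)A}$), the lower growth estimate holds: $e^{-k(A)(t-s)} \frac{\|z\|}{(1+\|z\|)^2} \leq \frac{\|v(z,s,t)\|}{(1+\|v(z,s,t)\|)^2}$ for all $z \in \mathbb{B}$ and $t \geq s \geq 0$. -/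
open Metric Set

noncomputable section

/-!
Write `φ x = x / (1 + x)²`, which is increasing on `[0, 1]`. Fix `y ≠ 0` in the ball, a step
`w = v a (a + δ)`, the unit vector `u = y / ‖y‖` and a norming functional `ℓ` of `u`. Then
`ζ ↦ ℓ (w (ζ • u))` is a Schwarz function of the disc whose derivative at `0` has modulus
`c ≥ Re ℓ (e^{-δA} u) ≥ 1 - k(A) δ - o(δ)`. The Schwarz–Pick lemma for its difference quotient
gives `‖y‖ (c - ‖y‖) ≤ ‖w y‖ (1 - c ‖y‖)`, hence `(1 - k(A) δ - o(δ)) φ ‖y‖ ≤ φ ‖w y‖`, uniformly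
for `‖y‖ ≤ ‖z‖` (Schwarz lemma). Splitting `[s, t]` into `n` equal steps with the semigroup
property and letting `n → ∞` turns the product of these factors into `e^{-k(A)(t - s)}`.
-/

open scoped ComplexConjugate

namespace Complex

theorem norm_one_sub_conj_mul_sq (a w : ℂ) :
    ‖1 - conj a * w‖ ^ 2 = ‖w - a‖ ^ 2 + (1 - ‖a‖ ^ 2) * (1 - ‖w‖ ^ 2) := by
  simp only [← normSq_eq_norm_sq, normSq_apply, sub_re, sub_im, mul_re, mul_im, one_re, one_im,
    conj_re, conj_im]
  ring

theorem norm_sub_le_norm_one_sub_conj_mul {a w : ℂ} (ha : ‖a‖ ≤ 1) (hw : ‖w‖ ≤ 1) :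
    ‖w - a‖ ≤ ‖1 - conj a * w‖ := by
  refine (pow_le_pow_iff_left₀ (norm_nonneg _) (norm_nonneg _) two_ne_zero).mp ?_
  rw [norm_one_sub_conj_mul_sq]
  have : 0 ≤ (1 - ‖a‖ ^ 2) * (1 - ‖w‖ ^ 2) := by
    apply mul_nonneg <;> nlinarith [norm_nonneg a, norm_nonneg w]
  linarith

theorem norm_sub_le_norm_mul_of_norm_sub_le {a w : ℂ} {L : ℝ} (hL₀ : 0 ≤ L) (hL₁ : L ≤ 1)
    (ha : ‖a‖ ≤ 1) (hw : ‖w‖ ≤ 1) (h : ‖w - a‖ ≤ L * ‖1 - conj a * w‖) :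
    ‖a‖ - L ≤ ‖w‖ * (1 - ‖a‖ * L) := by
  have hsq : ‖w - a‖ ^ 2 ≤ L ^ 2 * ‖1 - conj a * w‖ ^ 2 := by
    rw [← mul_pow]; exact pow_le_pow_left₀ (norm_nonneg _) h 2
  rw [norm_one_sub_conj_mul_sq] at hsq
  have hdist : (‖a‖ - ‖w‖) ^ 2 ≤ ‖w - a‖ ^ 2 := by
    rw [← sq_abs, abs_sub_comm]
    exact pow_le_pow_left₀ (abs_nonneg _) (abs_norm_sub_norm_le w a) 2
  -- for `s = ‖a‖`, `t = ‖w‖`: `(s - t)² + (1 - s²)(1 - t²) = (1 - s t)²`, so `|s - t| ≤ L (1 - s t)`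
  have key : (‖a‖ - ‖w‖) ^ 2 ≤ (L * (1 - ‖a‖ * ‖w‖)) ^ 2 := by
    have hL2 : 0 ≤ 1 - L ^ 2 := by nlinarith
    nlinarith [mul_le_mul_of_nonneg_left hdist hL2]
  have hst : 0 ≤ L * (1 - ‖a‖ * ‖w‖) := mul_nonneg hL₀ (by nlinarith [norm_nonneg a])
  nlinarith [abs_le_of_sq_le_sq' key hst]

theorem norm_mul_sub_le_of_mapsTo_ball {f : ℂ → ℂ} (hd : DifferentiableOn ℂ f (ball 0 1))
    (hf : MapsTo f (ball 0 1) (closedBall 0 1)) (h₀ : f 0 = 0) {z : ℂ} (hz : ‖z‖ < 1) :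
    ‖z‖ * (‖deriv f 0‖ - ‖z‖) ≤ ‖f z‖ * (1 - ‖deriv f 0‖ * ‖z‖) := by
  have hf' : MapsTo f (ball 0 1) (closedBall (f 0) 1) := by rwa [h₀]
  set g := dslope f 0
  have hg : ∀ w ∈ ball (0 : ℂ) 1, ‖g w‖ ≤ 1 := fun w hw ↦ by
    simpa using norm_dslope_le_div_of_mapsTo_ball hd hf' hw
  have hz' : z ∈ ball (0 : ℂ) 1 := mem_ball_zero_iff.mpr hz
  rw [← dslope_same]
  rcases (hg 0 (mem_ball_self one_pos)).eq_or_lt with ha | ha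
  · -- equality in the Schwarz lemma: `f` is a rotation
    have hlin := affine_of_mapsTo_ball_of_norm_dslope_eq_div hd hf' (mem_ball_self one_pos)
      (by rw [ha, div_one]) hz'
    have : ‖f z‖ = ‖z‖ := by
      rw [hlin]
      simp only [h₀, zero_add, sub_zero, norm_smul]
      rw [show ‖dslope f 0 0‖ = 1 from ha, mul_one]
    rw [ha, this, one_mul]
  · set a := g 0
    have hden : ∀ w ∈ ball (0 : ℂ) 1, 1 - conj a * g w ≠ 0 := fun w hw h ↦ by
      have : ‖conj a * g w‖ < 1 := by
        rw [norm_mul, RCLike.norm_conj]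
        nlinarith [hg w hw, norm_nonneg a, norm_nonneg (g w)]
      rw [← sub_eq_zero.mp h, norm_one] at this
      exact this.false
    -- the Möbius transform of `g` sending `a` to `0` is again a Schwarz map
    set h := fun w ↦ (g w - a) / (1 - conj a * g w)
    have hgd : DifferentiableOn ℂ g (ball 0 1) :=
      (differentiableOn_dslope (isOpen_ball.mem_nhds (mem_ball_self one_pos))).mpr hd
    have hhd : DifferentiableOn ℂ h (ball 0 1) :=
      (hgd.sub_const a).div ((hgd.const_mul _).const_sub 1) hden
    have hh : MapsTo h (ball 0 1) (closedBall 0 1) := fun w hw ↦ by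
      rw [mem_closedBall_zero_iff, norm_div, div_le_one (norm_pos_iff.mpr (hden w hw))]
      exact norm_sub_le_norm_one_sub_conj_mul ha.le (hg w hw)
    have hhz : ‖h z‖ ≤ ‖z‖ := norm_le_norm_of_mapsTo_ball hhd hh (by simp [h, a]) hz
    rw [norm_div, div_le_iff₀ (norm_pos_iff.mpr (hden z hz'))] at hhz
    have hfz : ‖f z‖ = ‖z‖ * ‖g z‖ := by
      simpa [h₀] using congrArg norm (sub_smul_dslope f 0 z).symm
    rw [hfz]
    have := norm_sub_le_norm_mul_of_norm_sub_le (norm_nonneg z) hz.le ha.le (hg z hz') hhz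
    nlinarith [norm_nonneg z]

end Complex

theorem mul_div_one_add_sq_le_of_mul_sub_le {ρ σ c ε r : ℝ} (hρ : 0 ≤ ρ) (hρr : ρ ≤ r) (hr : r < 1)
    (hσ : 0 ≤ σ) (hσ₁ : σ ≤ 1) (hc : c ≤ 1) (hcε : 1 - ε ≤ c)
    (h : ρ * (c - ρ) ≤ σ * (1 - c * ρ)) :
    (1 - ε - ε ^ 2 / (1 - r) ^ 2) * (ρ / (1 + ρ) ^ 2) ≤ σ / (1 + σ) ^ 2 := by
  have hρ₁ : ρ < 1 := hρr.trans_lt hr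
  -- with `P = ρ (c - ρ)` and `Q = 1 - c ρ` one has `1 - ρ² = P + Q` and
  -- `σ (P + Q)² - P Q (1 + σ)² = (σ Q - P) (Q - σ P)`
  have hcross : ρ * (c - ρ) * (1 - c * ρ) * (1 + σ) ^ 2 ≤ σ * (1 - ρ ^ 2) ^ 2 := by
    have hQP : 0 ≤ (1 - c * ρ) - σ * (ρ * (c - ρ)) := by
      rcases le_total 0 (ρ * (c - ρ)) with hP | hP
      · nlinarith [mul_le_mul_of_nonneg_right hσ₁ hP]
      · nlinarith [mul_nonneg hσ (neg_nonneg.mpr hP)]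
    nlinarith [mul_nonneg (sub_nonneg.mpr h) hQP]
  -- `(c - ρ)(1 - c ρ)` increases with `c ≤ 1`, and equals `(1 - ρ)²(1 - ε) - ε² ρ` at `c = 1 - ε`
  have hfactor : (1 - ε - ε ^ 2 / (1 - r) ^ 2) * (1 - ρ) ^ 2 ≤ (c - ρ) * (1 - c * ρ) := by
    have hr' : ε ^ 2 * ρ ≤ ε ^ 2 / (1 - r) ^ 2 * (1 - ρ) ^ 2 := by
      rw [div_mul_eq_mul_div, le_div_iff₀ (by nlinarith)]
      have : ρ * (1 - r) ^ 2 ≤ (1 - ρ) ^ 2 := by nlinarith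
      nlinarith [mul_le_mul_of_nonneg_left this (sq_nonneg ε)]
    have hmono : 0 ≤ (ε - (1 - c)) * ((1 - ρ) ^ 2 + ρ * (1 - c + ε)) :=
      mul_nonneg (by linarith) (add_nonneg (sq_nonneg _) (mul_nonneg hρ (by linarith)))
    generalize ε ^ 2 / (1 - r) ^ 2 = K at hr' ⊢
    nlinarith
  rw [mul_div_assoc', div_le_div_iff₀ (by positivity) (by positivity)]
  refine le_of_mul_le_mul_right ?_ (pow_pos (sub_pos.mpr hρ₁) 2)
  calc (1 - ε - ε ^ 2 / (1 - r) ^ 2) * ρ * (1 + σ) ^ 2 * (1 - ρ) ^ 2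
      = (1 - ε - ε ^ 2 / (1 - r) ^ 2) * (1 - ρ) ^ 2 * (ρ * (1 + σ) ^ 2) := by ring
    _ ≤ (c - ρ) * (1 - c * ρ) * (ρ * (1 + σ) ^ 2) :=
      mul_le_mul_of_nonneg_right hfactor (by positivity)
    _ ≤ σ * (1 - ρ ^ 2) ^ 2 := by linarith
    _ = σ * (1 + ρ) ^ 2 * (1 - ρ) ^ 2 := by ring

section SchwarzMapping

variable {X : Type*} [NormedAddCommGroup X] [NormedSpace ℂ X] {w : X → X}

theorem IsSchwarzMapping.norm_le (hw : IsSchwarzMapping w) {y : X} (hy : y ∈ ball (0 : X) 1) :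
    ‖w y‖ ≤ ‖y‖ :=
  Complex.norm_le_norm_of_mapsTo_ball hw.1 (hw.2.1.mono_right ball_subset_closedBall) hw.2.2
    (mem_ball_zero_iff.mp hy)

theorem IsSchwarzMapping.comp_smul_line (hw : IsSchwarzMapping w) {u : X} (hu : ‖u‖ = 1)
    {ℓ : X →L[ℂ] ℂ} (hℓ : ‖ℓ‖ ≤ 1) :
    DifferentiableOn ℂ (fun ζ : ℂ ↦ ℓ (w (ζ • u))) (ball 0 1) ∧
      MapsTo (fun ζ : ℂ ↦ ℓ (w (ζ • u))) (ball 0 1) (closedBall 0 1) ∧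
      ℓ (w ((0 : ℂ) • u)) = 0 ∧
      deriv (fun ζ : ℂ ↦ ℓ (w (ζ • u))) 0 = ℓ (fderiv ℂ w 0 u) := by
  have hline : MapsTo (fun ζ : ℂ ↦ ζ • u) (ball 0 1) (ball 0 1) := fun ζ hζ ↦ by
    simpa [norm_smul, hu] using hζ
  refine ⟨ℓ.differentiable.comp_differentiableOn
      (hw.1.comp (differentiable_id.smul_const u).differentiableOn hline), fun ζ hζ ↦ ?_,
    by simp [hw.2.2], ?_⟩
  · rw [mem_closedBall_zero_iff]
    exact (ℓ.le_opNorm _).trans (mul_le_one₀ hℓ (norm_nonneg _)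
      (mem_ball_zero_iff.mp (hw.2.1 (hline hζ))).le)
  · have hw₀ : HasFDerivAt w (fderiv ℂ w 0) ((0 : ℂ) • u) := by
      rw [zero_smul]
      exact (hw.1.differentiableAt (ball_mem_nhds 0 one_pos)).hasFDerivAt
    simpa [Function.comp_def] using (ℓ.hasFDerivAt.comp_hasDerivAt 0
      (hw₀.comp_hasDerivAt 0 ((hasDerivAt_id 0).smul_const u))).deriv

theorem IsSchwarzMapping.mul_div_one_add_sq_le (hw : IsSchwarzMapping w) {ε r : ℝ} (hr : r < 1)
    (hε : ∀ u : X, ‖u‖ = 1 → ∀ ℓ ∈ normingFunctionals u, 1 - ε ≤ (ℓ (fderiv ℂ w 0 u)).re)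
    {y : X} (hy : ‖y‖ ≤ r) :
    (1 - ε - ε ^ 2 / (1 - r) ^ 2) * (‖y‖ / (1 + ‖y‖) ^ 2) ≤ ‖w y‖ / (1 + ‖w y‖) ^ 2 := by
  rcases eq_or_ne y 0 with rfl | hy₀
  · simp [hw.2.2]
  set u := (‖y‖⁻¹ : ℂ) • y
  have hu : ‖u‖ = 1 := norm_smul_inv_norm hy₀
  obtain ⟨ℓ, hℓ, hℓu⟩ := exists_dual_vector ℂ u (by rw [hu]; exact one_ne_zero)
  obtain ⟨hfd, hfm, hf₀, hf'⟩ := hw.comp_smul_line hu hℓ.le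
  have hc₁ : ‖ℓ (fderiv ℂ w 0 u)‖ ≤ 1 := by
    rw [← hf']
    exact Complex.norm_deriv_le_one_of_mapsTo_ball hfd (by rwa [hf₀]) one_pos
  have hcε : 1 - ε ≤ ‖ℓ (fderiv ℂ w 0 u)‖ :=
    (hε u hu ℓ ⟨hℓu, hℓ⟩).trans (Complex.re_le_norm _)
  have hyu : ((‖y‖ : ℝ) : ℂ) • u = y := by simp [u, smul_smul, hy₀]
  have hpick := Complex.norm_mul_sub_le_of_mapsTo_ball hfd hfm hf₀ (z := ‖y‖)
    (by simpa using hy.trans_lt hr)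
  simp only [Complex.norm_real, Real.norm_of_nonneg (norm_nonneg y), hyu, hf'] at hpick
  have hσ : ‖ℓ (w y)‖ ≤ ‖w y‖ := by simpa [hℓ] using ℓ.le_opNorm (w y)
  have hwy : w y ∈ ball (0 : X) 1 := hw.2.1 (mem_ball_zero_iff.mpr (hy.trans_lt hr))
  refine mul_div_one_add_sq_le_of_mul_sub_le (norm_nonneg y) hy hr (norm_nonneg _)
    (mem_ball_zero_iff.mp hwy).le hc₁ hcε (hpick.trans ?_)
  exact mul_le_mul_of_nonneg_right hσ
    (sub_nonneg.mpr (mul_le_one₀ hc₁ (norm_nonneg y) (hy.trans hr.le)))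

end SchwarzMapping

open Filter Topology Asymptotics

section Exponential

variable {X : Type*} [NormedAddCommGroup X] [NormedSpace ℂ X]

theorem re_apply_le_kUpper (A : X →L[ℂ] X) {u : X} (hu : ‖u‖ = 1) {ℓ : X →L[ℂ] ℂ}
    (hℓ : ℓ ∈ normingFunctionals u) : (ℓ (A u)).re ≤ kUpper A := by
  refine le_csSup ⟨‖A‖, ?_⟩ ⟨u, ℓ, hu, hℓ, rfl⟩
  rintro _ ⟨u, ℓ, hu, hℓ, rfl⟩
  calc (ℓ (A u)).re ≤ ‖ℓ (A u)‖ := Complex.re_le_norm _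
    _ ≤ ‖ℓ‖ * (‖A‖ * ‖u‖) := ℓ.le_opNorm_of_le (A.le_opNorm u)
    _ = ‖A‖ := by rw [hℓ.2, hu, one_mul, mul_one]

def stepLoss (A : X →L[ℂ] X) (δ : ℝ) : ℝ :=
  kUpper A * δ + ‖NormedSpace.exp ((-δ : ℂ) • A) - 1 + (δ : ℂ) • A‖

theorem one_sub_stepLoss_le_re (A : X →L[ℂ] X) {δ : ℝ} (hδ : 0 ≤ δ) {u : X} (hu : ‖u‖ = 1)
    {ℓ : X →L[ℂ] ℂ} (hℓ : ℓ ∈ normingFunctionals u) :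
    1 - stepLoss A δ ≤ (ℓ (NormedSpace.exp ((-δ : ℂ) • A) u)).re := by
  set R := NormedSpace.exp ((-δ : ℂ) • A) - 1 + (δ : ℂ) • A
  have hR : -‖R‖ ≤ (ℓ (R u)).re := by
    refine neg_le_of_abs_le ((Complex.abs_re_le_norm _).trans ?_)
    calc ‖ℓ (R u)‖ ≤ ‖ℓ‖ * (‖R‖ * ‖u‖) := ℓ.le_opNorm_of_le (R.le_opNorm u)
      _ = ‖R‖ := by rw [hℓ.2, hu, one_mul, mul_one]
  have hexp : ℓ (NormedSpace.exp ((-δ : ℂ) • A) u) = 1 - δ * ℓ (A u) + ℓ (R u) := by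
    simp [R, hℓ.1, hu]
  rw [hexp]
  simp only [Complex.add_re, Complex.sub_re, Complex.one_re, Complex.re_ofReal_mul, stepLoss]
  nlinarith [mul_le_mul_of_nonneg_left (re_apply_le_kUpper A hu hℓ) hδ]

theorem tendsto_nat_mul_stepLoss [CompleteSpace X] (A : X →L[ℂ] X) (τ : ℝ) :
    Tendsto (fun n : ℕ ↦ n * stepLoss A (τ / n)) atTop (𝓝 (kUpper A * τ)) := by
  set E := fun δ : ℝ ↦ NormedSpace.exp ((-δ : ℂ) • A) - 1 + (δ : ℂ) • A
  have hE : E =o[𝓝 0] fun δ ↦ δ := by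
    have hline : HasDerivAt (fun δ : ℝ ↦ δ • -A) (-A) 0 := by
      simpa using (hasDerivAt_id (0 : ℝ)).smul_const (-A)
    have hF : HasDerivAt (fun δ : ℝ ↦ NormedSpace.exp ((-δ : ℂ) • A)) (-A) 0 := by
      have := (hasFDerivAt_exp_zero (𝕂 := ℝ) (𝔸 := X →L[ℂ] X)).comp_hasDerivAt_of_eq 0 hline
        (by simp)
      simpa [Function.comp_def, Complex.coe_smul] using this
    simpa [hasDerivAt_iff_isLittleO_nhds_zero, E, Complex.coe_smul, sub_eq_add_neg] using hF
  have hremainder : Tendsto (fun n : ℕ ↦ n * ‖E (τ / n)‖) atTop (𝓝 0) := by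
    have h := (isBigO_refl (fun n : ℕ ↦ (n : ℝ)) atTop).mul_isLittleO
      (hE.comp_tendsto (tendsto_const_div_atTop_nhds_zero_nat τ)).norm_left
    have hτ : (fun n : ℕ ↦ (n : ℝ) * (τ / n)) =ᶠ[atTop] fun _ ↦ τ := by
      filter_upwards [eventually_ne_atTop 0] with n hn
      field_simp
    exact isLittleO_one_iff ℝ |>.mp <|
      h.trans_isBigO (hτ.trans_isBigO (isBigO_const_const τ one_ne_zero atTop))
  have hsplit : (fun n : ℕ ↦ kUpper A * τ + n * ‖E (τ / n)‖) =ᶠ[atTop]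
      fun n : ℕ ↦ n * stepLoss A (τ / n) := by
    filter_upwards [eventually_ne_atTop 0] with n hn
    simp only [stepLoss, E]
    field_simp
  simpa using (tendsto_const_nhds.add hremainder).congr' hsplit

end Exponential

theorem tendsto_zero_of_tendsto_nat_mul {ε : ℕ → ℝ} {κ : ℝ}
    (h : Tendsto (fun n : ℕ ↦ n * ε n) atTop (𝓝 κ)) : Tendsto ε atTop (𝓝 0) := by
  refine (h.div_atTop tendsto_natCast_atTop_atTop).congr' ?_
  filter_upwards [eventually_ne_atTop 0] with n hn
  field_simp

theorem tendsto_one_sub_sub_sq_div_pow {ε : ℕ → ℝ} {κ : ℝ} (c : ℝ)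
    (h : Tendsto (fun n : ℕ ↦ n * ε n) atTop (𝓝 κ)) :
    Tendsto (fun n : ℕ ↦ (1 - ε n - ε n ^ 2 / c) ^ n) atTop (𝓝 (Real.exp (-κ))) := by
  have hlin : Tendsto (fun n : ℕ ↦ n * (-ε n - ε n ^ 2 / c)) atTop (𝓝 (-κ - κ * 0 / c)) :=
    (h.neg.sub ((h.mul (tendsto_zero_of_tendsto_nat_mul h)).div_const c)).congr fun n ↦ by ring
  rw [mul_zero, zero_div, sub_zero] at hlin
  simpa only [← sub_eq_add_neg, add_sub_assoc'] using Real.tendsto_one_add_pow_exp_of_tendsto hlin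

theorem pow_mul_div_one_add_sq_le_of_schwarz_family {X : Type*} [NormedAddCommGroup X]
    [NormedSpace ℂ X] (A : X →L[ℂ] X) (v : ℝ → ℝ → X → X)
    (hv_schwarz : ∀ s t : ℝ, 0 ≤ s → s ≤ t → IsSchwarzMapping (v s t))
    (hv_semigroup : ∀ s t u : ℝ, 0 ≤ s → s ≤ t → t ≤ u →
      ∀ z ∈ ball (0 : X) 1, v t u (v s t z) = v s u z)
    (hv_deriv : ∀ s t : ℝ, 0 ≤ s → s ≤ t →
      fderiv ℂ (v s t) 0 = NormedSpace.exp ((-(t - s) : ℂ) • A))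
    {z : X} (hz : z ∈ ball (0 : X) 1) {s t : ℝ} (hs : 0 ≤ s) (hst : s ≤ t) {n : ℕ} (hn : n ≠ 0)
    (hq : 0 ≤ 1 - stepLoss A ((t - s) / n) - stepLoss A ((t - s) / n) ^ 2 / (1 - ‖z‖) ^ 2) :
    (1 - stepLoss A ((t - s) / n) - stepLoss A ((t - s) / n) ^ 2 / (1 - ‖z‖) ^ 2) ^ n *
      (‖z‖ / (1 + ‖z‖) ^ 2) ≤ ‖v s t z‖ / (1 + ‖v s t z‖) ^ 2 := by
  have hstep : ∀ a δ : ℝ, 0 ≤ a → 0 ≤ δ → ∀ y : X, ‖y‖ ≤ ‖z‖ →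
      (1 - stepLoss A δ - stepLoss A δ ^ 2 / (1 - ‖z‖) ^ 2) * (‖y‖ / (1 + ‖y‖) ^ 2) ≤
        ‖v a (a + δ) y‖ / (1 + ‖v a (a + δ) y‖) ^ 2 := by
    intro a δ ha hδ y hy
    refine (hv_schwarz a (a + δ) ha (by linarith)).mul_div_one_add_sq_le
      (mem_ball_zero_iff.mp hz) (fun u hu ℓ hℓ ↦ ?_) hy
    rw [hv_deriv a (a + δ) ha (by linarith)]
    simpa using one_sub_stepLoss_le_re A hδ hu hℓ
  set δ := (t - s) / n
  set q := 1 - stepLoss A δ - stepLoss A δ ^ 2 / (1 - ‖z‖) ^ 2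
  have hδ : 0 ≤ δ := div_nonneg (sub_nonneg.2 hst) n.cast_nonneg
  have hchain : ∀ i : ℕ, q ^ i * (‖z‖ / (1 + ‖z‖) ^ 2) ≤
      ‖v s (s + i * δ) z‖ / (1 + ‖v s (s + i * δ) z‖) ^ 2 := by
    intro i
    induction i with
    -- `v s s` need not be the identity: the step of length `0` compares `z` with `v s s z`
    | zero => simpa [stepLoss] using hstep s 0 hs le_rfl z le_rfl
    | succ i ih =>
      have hi : s ≤ s + i * δ := le_add_of_nonneg_right (by positivity)
      rw [pow_succ', mul_assoc, show s + (i + 1 : ℕ) * δ = s + i * δ + δ by push_cast; ring,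
        ← hv_semigroup s (s + i * δ) _ hs hi (by linarith) z hz]
      exact (mul_le_mul_of_nonneg_left ih hq).trans
        (hstep _ δ (hs.trans hi) hδ _ ((hv_schwarz s _ hs hi).norm_le hz))
  have hT : s + n * δ = t := by
    simp only [δ]
    field_simp
    ring
  simpa [hT] using hchain n

theorem schwarz_family_lower_growth_general {X : Type*} [NormedAddCommGroup X] [NormedSpace ℂ X]
    [CompleteSpace X]
    (A : X →L[ℂ] X)
    (v : ℝ → ℝ → X → X)
    (hv_schwarz : ∀ s t : ℝ, 0 ≤ s → s ≤ t → IsSchwarzMapping (v s t))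
    (hv_semigroup : ∀ s t u : ℝ, 0 ≤ s → s ≤ t → t ≤ u →
      ∀ z ∈ ball (0 : X) 1, v t u (v s t z) = v s u z)
    (hv_deriv : ∀ s t : ℝ, 0 ≤ s → s ≤ t →
      fderiv ℂ (v s t) 0 = NormedSpace.exp ((-(t - s) : ℂ) • A)) :
    ∀ z ∈ ball (0 : X) 1, ∀ s t : ℝ, 0 ≤ s → s ≤ t →
      Real.exp (-(kUpper A) * (t - s)) * (‖z‖ / (1 + ‖z‖) ^ 2) ≤
        ‖v s t z‖ / (1 + ‖v s t z‖) ^ 2 := by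
  intro z hz s t hs hst
  have hloss := tendsto_nat_mul_stepLoss A (t - s)
  have hfactor : Tendsto (fun n : ℕ ↦ 1 - stepLoss A ((t - s) / n) -
      stepLoss A ((t - s) / n) ^ 2 / (1 - ‖z‖) ^ 2) atTop (𝓝 1) := by
    simpa using ((tendsto_zero_of_tendsto_nat_mul hloss).const_sub 1).sub
      (((tendsto_zero_of_tendsto_nat_mul hloss).pow 2).div_const ((1 - ‖z‖) ^ 2))
  rw [neg_mul]
  refine le_of_tendsto ((tendsto_one_sub_sub_sq_div_pow ((1 - ‖z‖) ^ 2) hloss).mul_const _) ?_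
  filter_upwards [hfactor.eventually (eventually_ge_nhds zero_lt_one), eventually_ne_atTop 0]
    with n hq hn
  exact pow_mul_div_one_add_sq_le_of_schwarz_family A v hv_schwarz hv_semigroup hv_deriv hz hs hst
    hn hq

theorem schwarz_family_lower_growth {X : Type*} [NormedAddCommGroup X] [NormedSpace ℂ X]
    [CompleteSpace X]
    (hrefl : Function.Surjective (NormedSpace.inclusionInDoubleDual ℂ X))
    (A : X →L[ℂ] X) (hm : 0 < mLower A)
    (v : ℝ → ℝ → X → X)
    (hv_schwarz : ∀ s t : ℝ, 0 ≤ s → s ≤ t → IsSchwarzMapping (v s t))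
    (hv_semigroup : ∀ s t u : ℝ, 0 ≤ s → s ≤ t → t ≤ u →
      ∀ z ∈ ball (0 : X) 1, v t u (v s t z) = v s u z)
    (hv_ne : ∀ s t : ℝ, 0 ≤ s → s ≤ t → ∀ z ∈ ball (0 : X) 1, z ≠ 0 → v s t z ≠ 0)
    (hv_deriv : ∀ s t : ℝ, 0 ≤ s → s ≤ t →
      fderiv ℂ (v s t) 0 = NormedSpace.exp ((-(t - s) : ℂ) • A)) :
    ∀ z ∈ ball (0 : X) 1, ∀ s t : ℝ, 0 ≤ s → s ≤ t →
      Real.exp (-(kUpper A) * (t - s)) * (‖z‖ / (1 + ‖z‖) ^ 2) ≤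
        ‖v s t z‖ / (1 + ‖v s t z‖) ^ 2 :=
  schwarz_family_lower_growth_general A v hv_schwarz hv_semigroup hv_deriv
end
end

section
/- Let $X$ be a complex Banach space with unit ball $\mathbb{B}$, and let $g : \mathbb{B} \to X$ be holomorphic with $g(0) = 0$ such that $\Re[\ell_u(Dg(z)(u))] > 0$ for all $z$ in a ball $\mathbb{B}_{r_0}$, all unit vectors $u \in X$, and all $\ell_u \in T(u)$. Then $g$ is univalent on $\mathbb{B}_{r_0}$. -/
open Metric Set

noncomputable section

/-!
Given `z₁ ≠ z₂` in the ball, pick a norming functional `ℓ` of `z₁ - z₂`. By the mean value theorem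
applied to `t ↦ Re ℓ (g (z₂ + t (z₁ - z₂)))`, the number `Re ℓ (g z₁ - g z₂)` equals
`Re ℓ (Dg(c) (z₁ - z₂))` for some `c` on the segment, which is positive since the hypothesis on unit
vectors scales to all nonzero vectors. Hence `g z₁ ≠ g z₂`.
-/

section

variable {X : Type*} [NormedAddCommGroup X] [NormedSpace ℂ X]

theorem exists_mem_normingFunctionals {u : X} (hu : u ≠ 0) : ∃ ℓ, ℓ ∈ normingFunctionals u := by
  obtain ⟨ℓ, hℓ_norm, hℓu⟩ := exists_dual_vector ℂ u (norm_ne_zero_iff.2 hu)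
  exact ⟨ℓ, hℓu, hℓ_norm⟩

theorem ofReal_smul_mem_normingFunctionals {u : X} {ℓ : X →L[ℂ] ℂ} (hℓ : ℓ ∈ normingFunctionals u)
    {r : ℝ} (hr : 0 ≤ r) : ℓ ∈ normingFunctionals ((r : ℂ) • u) := by
  refine ⟨?_, hℓ.2⟩
  rw [map_smul, hℓ.1, norm_smul, Complex.norm_real, Real.norm_of_nonneg hr, smul_eq_mul,
    Complex.ofReal_mul]

theorem re_apply_pos_of_forall_norm_eq_one {A : X →L[ℂ] X}
    (hA : ∀ u : X, ‖u‖ = 1 → ∀ ℓ ∈ normingFunctionals u, 0 < (ℓ (A u)).re)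
    {u : X} (hu : u ≠ 0) {ℓ : X →L[ℂ] ℂ} (hℓ : ℓ ∈ normingFunctionals u) : 0 < (ℓ (A u)).re := by
  have hu_pos : 0 < ‖u‖ := norm_pos_iff.2 hu
  set v : X := ((‖u‖⁻¹ : ℝ) : ℂ) • u
  have hv_norm : ‖v‖ = 1 := by
    rw [norm_smul, Complex.norm_real, Real.norm_of_nonneg (inv_nonneg.2 hu_pos.le),
      inv_mul_cancel₀ hu_pos.ne']
  have hu_eq : u = (‖u‖ : ℂ) • v := by
    rw [smul_smul, ← Complex.ofReal_mul, mul_inv_cancel₀ hu_pos.ne', Complex.ofReal_one, one_smul]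
  have hv_pos := hA v hv_norm ℓ (ofReal_smul_mem_normingFunctionals hℓ (inv_nonneg.2 hu_pos.le))
  rw [hu_eq, map_smul, map_smul, smul_eq_mul, Complex.re_ofReal_mul]
  positivity

variable {Y : Type*} [NormedAddCommGroup Y] [NormedSpace ℂ Y]

theorem Convex.exists_re_apply_sub_eq_fderiv {s : Set X} (hs : Convex ℝ s) (hso : IsOpen s)
    {g : X → Y} (hg : DifferentiableOn ℂ g s) (ℓ : Y →L[ℂ] ℂ) {x y : X} (hx : x ∈ s)
    (hy : y ∈ s) : ∃ c ∈ segment ℝ x y, (ℓ (g y - g x)).re = (ℓ (fderiv ℂ g c (y - x))).re := by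
  have hderiv : ∀ z ∈ s, HasFDerivWithinAt (fun w => (ℓ (g w)).re)
      (Complex.reCLM.comp ((ℓ.comp (fderiv ℂ g z)).restrictScalars ℝ)) s z := fun z hz =>
    (Complex.reCLM.hasFDerivAt.comp z
      (((ℓ.hasFDerivAt.comp z (hg.differentiableAt (hso.mem_nhds hz)).hasFDerivAt)).restrictScalars
        ℝ)).hasFDerivWithinAt
  obtain ⟨c, hc, hmvt⟩ := domain_mvt hderiv hs hx hy
  refine ⟨c, hc, ?_⟩
  simpa only [map_sub, Complex.sub_re, ContinuousLinearMap.comp_apply,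
    ContinuousLinearMap.coe_restrictScalars', Complex.reCLM_apply] using hmvt

theorem Convex.injOn_of_re_apply_fderiv_pos {s : Set X} (hs : Convex ℝ s) (hso : IsOpen s)
    {g : X → X} (hg : DifferentiableOn ℂ g s)
    (hpos : ∀ z ∈ s, ∀ u : X, u ≠ 0 → ∀ ℓ ∈ normingFunctionals u, 0 < (ℓ (fderiv ℂ g z u)).re) :
    InjOn g s := by
  intro x hx y hy hxy
  by_contra hne
  have hyx : y - x ≠ 0 := sub_ne_zero.2 (Ne.symm hne)
  obtain ⟨ℓ, hℓ⟩ := exists_mem_normingFunctionals hyx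
  obtain ⟨c, hc, hmvt⟩ := hs.exists_re_apply_sub_eq_fderiv hso hg ℓ hx hy
  have hc_pos := hpos c (hs.segment_subset hx hy hc) (y - x) hyx ℓ hℓ
  rw [hxy, sub_self, map_zero, Complex.zero_re] at hmvt
  exact hc_pos.ne hmvt

end

theorem suffridge_univalence_criterion_general {X : Type*} [NormedAddCommGroup X] [NormedSpace ℂ X]
    (g : X → X) (r₀ : ℝ) (hr₀' : r₀ ≤ 1)
    (hg_hol : DifferentiableOn ℂ g (ball (0 : X) 1))
    (hpos : ∀ z ∈ ball (0 : X) r₀, ∀ u : X, ‖u‖ = 1 →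
      ∀ ℓ ∈ normingFunctionals u, 0 < (ℓ (fderiv ℂ g z u)).re) :
    InjOn g (ball (0 : X) r₀) :=
  (convex_ball 0 r₀).injOn_of_re_apply_fderiv_pos isOpen_ball
    (hg_hol.mono (ball_subset_ball hr₀'))
    fun z hz _ hu _ hℓ => re_apply_pos_of_forall_norm_eq_one (hpos z hz) hu hℓ

theorem suffridge_univalence_criterion {X : Type*} [NormedAddCommGroup X] [NormedSpace ℂ X]
    (g : X → X) (r₀ : ℝ) (hr₀ : 0 < r₀) (hr₀' : r₀ ≤ 1)
    (hg_hol : DifferentiableOn ℂ g (ball (0 : X) 1))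
    (hg0 : g 0 = 0)
    (hpos : ∀ z ∈ ball (0 : X) r₀, ∀ u : X, ‖u‖ = 1 →
      ∀ ℓ ∈ normingFunctionals u, 0 < (ℓ (fderiv ℂ g z u)).re) :
    InjOn g (ball (0 : X) r₀) :=
  suffridge_univalence_criterion_general g r₀ hr₀' hg_hol hpos
end
end
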